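/- arXiv:1910.02601 — 5 statements merged into one kernel-verified Lean document; each statement's English description precedes it below -/
import Mathlib

section
/- Let (X,d) be a metric space in which every open ball B(x,r) is relatively compact (has compact closure). Then the following are equivalent: (a) (X,d) satisfies the chain condition, i.e., there exists C ≥ 1 such that d_ε(x,y) ≤ C d(x,y) for all ε > 0 and all x,y ∈ X; (b) there exist C' ≥ 1 and a geodesic metric ρ on X such that C'^{-1} d(x,y) ≤ ρ(x,y) ≤ C' d(x,y) for all x,y ∈ X. -/
/-!
(a) ⇒ (b): under the chain condition `ρ := lim_{ε → 0} d_ε = sup_ε d_ε` is a metric with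
`d ≤ ρ ≤ C d`. Cutting almost minimal `ε`-chains from `x` to `y` at half their length and
extracting a convergent subsequence of the cut points (balls are relatively compact) yields
`ρ`-midpoints, and in the complete space `(X, ρ)` iterated midpoints at dyadic parameters converge
to a `ρ`-geodesic.

(b) ⇒ (a): for large `N` the points `γ (i / N)` of a `ρ`-geodesic form an `ε`-chain of length at
most `C ρ(x, y) ≤ C² d(x, y)`.
-/

open Metric ENNReal

/-- The `ε`-chain metric `d_ε` associated with a distance function `ρ`:
the infimum of total lengths of `ε`-chains from `x` to `y` (infimum of the
empty set being `∞`). An `ε`-chain from `x` to `y` is a finite sequence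
`x_0, …, x_N` (`N ≥ 1`) with `x_0 = x`, `x_N = y` and `ρ (x_i) (x_{i+1}) < ε`. -/
noncomputable def chainDist {X : Type*} (ρ : X → X → ℝ) (ε : ℝ) (x y : X) : ℝ≥0∞ :=
  ⨅ c : {c : ℕ × (ℕ → X) // 0 < c.1 ∧ c.2 0 = x ∧ c.2 c.1 = y ∧
      ∀ i < c.1, ρ (c.2 i) (c.2 (i + 1)) < ε},
    ∑ i ∈ Finset.range c.val.1, ENNReal.ofReal (ρ (c.val.2 i) (c.val.2 (i + 1)))

/-- `ρ : X → X → ℝ` is a metric on `X`. -/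
def IsMetricDist {X : Type*} (ρ : X → X → ℝ) : Prop :=
  (∀ x y, ρ x y = ρ y x) ∧ (∀ x y, ρ x y = 0 ↔ x = y) ∧ (∀ x y z, ρ x z ≤ ρ x y + ρ y z)

/-- `ρ` is a geodesic distance: any two points are joined by a curve `γ : [0,1] → X`
with `ρ (γ s) (γ t) = |s − t| ρ(x,y)`. -/
def IsGeodesicDist {X : Type*} (ρ : X → X → ℝ) : Prop :=
  ∀ x y : X, ∃ γ : ℝ → X, γ 0 = x ∧ γ 1 = y ∧
    ∀ s ∈ Set.Icc (0 : ℝ) 1, ∀ t ∈ Set.Icc (0 : ℝ) 1, ρ (γ s) (γ t) = |s - t| * ρ x y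

open Filter Topology Finset

theorem exists_sum_range_le_half {g : ℕ → ℝ} {N : ℕ} {ε : ℝ} (hε : 0 ≤ ε) (hg0 : ∀ i, 0 ≤ g i)
    (hgε : ∀ i < N, g i ≤ ε) :
    ∃ k ≤ N, ∑ i ∈ range k, g i ≤ (∑ i ∈ range N, g i) / 2 ∧
      ∑ i ∈ range N, g i - ∑ i ∈ range k, g i ≤ (∑ i ∈ range N, g i) / 2 + ε := by
  set S := ∑ i ∈ range N, g i
  have hS : 0 ≤ S := sum_nonneg fun i _ => hg0 i
  set k := Nat.findGreatest (fun k => ∑ i ∈ range k, g i ≤ S / 2) N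
  have hk : ∑ i ∈ range k, g i ≤ S / 2 :=
    Nat.findGreatest_spec (P := fun k => ∑ i ∈ range k, g i ≤ S / 2) (Nat.zero_le N)
      (by simp only [sum_range_zero]; linarith)
  refine ⟨k, Nat.findGreatest_le N, hk, ?_⟩
  rcases (Nat.findGreatest_le N : k ≤ N).eq_or_lt with hkN | hkN
  · rw [show k = N from hkN]
    linarith
  · have hk1 : S / 2 < ∑ i ∈ range (k + 1), g i :=
      not_le.1 (Nat.findGreatest_is_greatest (Nat.lt_succ_self k) hkN)
    rw [sum_range_succ] at hk1
    linarith [hgε k hkN]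

section ChainDist

variable {X : Type*} [PseudoMetricSpace X] {ε : ℝ} {x y : X}

theorem le_chainDist {a : ℝ≥0∞}
    (h : ∀ (N : ℕ) (f : ℕ → X), f 0 = x → f N = y → (∀ i < N, dist (f i) (f (i + 1)) < ε) →
      a ≤ ENNReal.ofReal (∑ i ∈ range N, dist (f i) (f (i + 1)))) :
    a ≤ chainDist dist ε x y :=
  le_iInf fun ⟨⟨N, f⟩, _, hf0, hfN, hf⟩ => by
    rw [← ENNReal.ofReal_sum_of_nonneg fun _ _ => dist_nonneg]
    exact h N f hf0 hfN hf

theorem exists_sum_lt_of_chainDist_lt {a : ℝ≥0∞} (h : chainDist dist ε x y < a) :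
    ∃ (N : ℕ) (f : ℕ → X), f 0 = x ∧ f N = y ∧ (∀ i < N, dist (f i) (f (i + 1)) < ε) ∧
      ENNReal.ofReal (∑ i ∈ range N, dist (f i) (f (i + 1))) < a := by
  obtain ⟨⟨⟨N, f⟩, _, hf0, hfN, hf⟩, hlt⟩ := iInf_lt_iff.1 h
  rw [← ENNReal.ofReal_sum_of_nonneg fun _ _ => dist_nonneg] at hlt
  exact ⟨N, f, hf0, hfN, hf, hlt⟩

/-- Unlike in `chainDist`, `N = 0` is allowed (the constant chain of length `1` replaces it). -/
theorem chainDist_le_sum (hε : 0 < ε) (f : ℕ → X) (N : ℕ)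
    (hf : ∀ i < N, dist (f i) (f (i + 1)) < ε) :
    chainDist dist ε (f 0) (f N) ≤ ENNReal.ofReal (∑ i ∈ range N, dist (f i) (f (i + 1))) := by
  rcases Nat.eq_zero_or_pos N with rfl | hN
  · refine (iInf_le _ ⟨(1, fun _ => f 0), one_pos, rfl, rfl, by simpa using hε⟩).trans ?_
    simp
  · rw [ENNReal.ofReal_sum_of_nonneg fun _ _ => dist_nonneg]
    exact iInf_le_of_le ⟨(N, f), hN, rfl, rfl, hf⟩ le_rfl

theorem ofReal_dist_le_chainDist : ENNReal.ofReal (dist x y) ≤ chainDist dist ε x y :=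
  le_chainDist fun N f hf0 hfN _ => by
    rw [← hf0, ← hfN]
    exact ENNReal.ofReal_le_ofReal (dist_le_range_sum_dist f N)

theorem chainDist_self (hε : 0 < ε) (x : X) : chainDist dist ε x x = 0 := by
  simpa using chainDist_le_sum hε (fun _ => x) 0 (by simp)

theorem chainDist_anti {ε' : ℝ} (hε : 0 < ε) (h : ε ≤ ε') :
    chainDist dist ε' x y ≤ chainDist dist ε x y :=
  le_chainDist fun N f hf0 hfN hf => by
    rw [← hf0, ← hfN]
    exact chainDist_le_sum (hε.trans_le h) f N fun i hi => (hf i hi).trans_le h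

theorem chainDist_comm_le (hε : 0 < ε) (x y : X) :
    chainDist dist ε x y ≤ chainDist dist ε y x :=
  le_chainDist fun N f hf0 hfN hf => by
    have hrev : ∀ i < N,
        dist (f (N - i)) (f (N - (i + 1))) = dist (f (N - 1 - i)) (f (N - 1 - i + 1)) := fun i hi => by rw [dist_comm, show N - i = N - 1 - i + 1 by omega, Nat.sub_sub, add_comm 1 i]
    have := chainDist_le_sum hε (fun i => f (N - i)) N fun i hi => by
      rw [hrev i hi]; exact hf _ (by omega)
    simp only [Nat.sub_zero, Nat.sub_self, hf0, hfN] at this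
    rwa [sum_congr rfl fun i hi => hrev i (mem_range.1 hi),
      sum_range_reflect (fun j => dist (f j) (f (j + 1))) N] at this

theorem chainDist_comm (hε : 0 < ε) (x y : X) : chainDist dist ε x y = chainDist dist ε y x :=
  (chainDist_comm_le hε x y).antisymm (chainDist_comm_le hε y x)

theorem chainDist_le_add_sum (hε : 0 < ε) (f g : ℕ → X) (N M : ℕ) (hfg : f N = g 0)
    (hf : ∀ i < N, dist (f i) (f (i + 1)) < ε) (hg : ∀ i < M, dist (g i) (g (i + 1)) < ε) :
    chainDist dist ε (f 0) (g M) ≤ ENNReal.ofReal (∑ i ∈ range N, dist (f i) (f (i + 1))) +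
      ENNReal.ofReal (∑ i ∈ range M, dist (g i) (g (i + 1))) := by
  set h : ℕ → X := fun i => if i ≤ N then f i else g (i - N)
  have h_left : ∀ i ≤ N, h i = f i := fun i hi => if_pos hi
  have h_right : ∀ j, h (N + j) = g j := fun j => by
    rcases Nat.eq_zero_or_pos j with rfl | hj
    · simpa [h] using hfg
    · simp [h, show ¬ N + j ≤ N by omega]
  have step_left : ∀ i < N, dist (h i) (h (i + 1)) = dist (f i) (f (i + 1)) := fun i hi => by
    rw [h_left i hi.le, h_left (i + 1) hi]
  have step_right : ∀ j, dist (h (N + j)) (h (N + j + 1)) = dist (g j) (g (j + 1)) := fun j => by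
    rw [h_right, add_assoc, h_right]
  have := chainDist_le_sum hε h (N + M) fun i hi => by
    rcases lt_or_ge i N with hiN | hiN
    · rw [step_left i hiN]; exact hf i hiN
    · obtain ⟨j, rfl⟩ := Nat.exists_eq_add_of_le hiN
      rw [step_right]; exact hg j (by omega)
  rw [h_left 0 (Nat.zero_le _), h_right, sum_range_add,
    sum_congr rfl fun i hi => step_left i (mem_range.1 hi),
    sum_congr rfl fun j _ => step_right j,
    ENNReal.ofReal_add (sum_nonneg fun _ _ => dist_nonneg)
      (sum_nonneg fun _ _ => dist_nonneg)] at this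
  exact this

theorem chainDist_triangle (hε : 0 < ε) (x y z : X) :
    chainDist dist ε x z ≤ chainDist dist ε x y + chainDist dist ε y z := by
  refine ENNReal.le_iInf_add_iInf fun ⟨⟨N, f⟩, _, hf0, hfN, hf⟩ ⟨⟨M, g⟩, _, hg0, hgM, hg⟩ => ?_
  dsimp only at hf0 hfN hf hg0 hgM hg ⊢
  rw [← hf0, ← hgM, ← ENNReal.ofReal_sum_of_nonneg fun _ _ => dist_nonneg,
    ← ENNReal.ofReal_sum_of_nonneg fun _ _ => dist_nonneg]
  exact chainDist_le_add_sum hε f g N M (hfN.trans hg0.symm) hf hg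

/-- The cut is made at a point of the chain, so the second half may be longer by one step. -/
theorem exists_chainDist_le_half (hε : 0 < ε) {L : ℝ}
    (h : chainDist dist ε x y < ENNReal.ofReal L) :
    ∃ z, chainDist dist ε x z ≤ ENNReal.ofReal (L / 2) ∧
      chainDist dist ε z y ≤ ENNReal.ofReal (L / 2 + ε) := by
  obtain ⟨N, f, rfl, rfl, hf, hlt⟩ := exists_sum_lt_of_chainDist_lt h
  have hL : ∑ i ∈ range N, dist (f i) (f (i + 1)) < L :=
    (ENNReal.ofReal_lt_ofReal_iff_of_nonneg (sum_nonneg fun _ _ => dist_nonneg)).1 hlt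
  obtain ⟨k, hkN, hfirst, hsecond⟩ :=
    exists_sum_range_le_half hε.le (fun _ => dist_nonneg) fun i hi => (hf i hi).le
  obtain ⟨m, rfl⟩ := Nat.exists_eq_add_of_le hkN
  refine ⟨f k, ?_, ?_⟩
  · exact (chainDist_le_sum hε f k fun i hi => hf i (by omega)).trans
      (ENNReal.ofReal_le_ofReal (by linarith))
  · have := chainDist_le_sum hε (fun i => f (k + i)) m fun i hi => hf (k + i) (by omega)
    simp only [add_zero, ← add_assoc] at this
    refine this.trans (ENNReal.ofReal_le_ofReal ?_)
    rw [sum_range_add] at hsecond hL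
    linarith

end ChainDist

section ChainSupDist

variable {X : Type*} [PseudoMetricSpace X] {C : ℝ} {x y : X}

/-- The limit `d_0 = lim_{ε → 0} d_ε`, which is the supremum since `d_ε` decreases in `ε`. -/
noncomputable def chainSupDist (x y : X) : ℝ≥0∞ :=
  ⨆ (ε : ℝ) (_ : 0 < ε), chainDist dist ε x y

theorem chainDist_le_chainSupDist {ε : ℝ} (hε : 0 < ε) : chainDist dist ε x y ≤ chainSupDist x y :=
  le_iSup₂ (f := fun ε (_ : 0 < ε) => chainDist dist ε x y) ε hε

theorem ofReal_dist_le_chainSupDist : ENNReal.ofReal (dist x y) ≤ chainSupDist x y :=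
  ofReal_dist_le_chainDist.trans (chainDist_le_chainSupDist one_pos)

theorem chainSupDist_self (x : X) : chainSupDist x x = 0 :=
  nonpos_iff_eq_zero.1 <| iSup₂_le fun _ hε => (chainDist_self hε x).le

theorem chainSupDist_comm (x y : X) : chainSupDist x y = chainSupDist y x :=
  iSup_congr fun _ => iSup_congr fun hε => chainDist_comm hε x y

theorem chainSupDist_triangle (x y z : X) :
    chainSupDist x z ≤ chainSupDist x y + chainSupDist y z :=
  iSup₂_le fun _ hε => (chainDist_triangle hε x y z).trans <|
    add_le_add (chainDist_le_chainSupDist hε) (chainDist_le_chainSupDist hε)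

variable (X) in
def ChainCondition (C : ℝ) : Prop :=
  ∀ ε : ℝ, 0 < ε → ∀ x y : X, chainDist dist ε x y ≤ ENNReal.ofReal (C * dist x y)

theorem ChainCondition.chainSupDist_le (hch : ChainCondition X C) (x y : X) :
    chainSupDist x y ≤ ENNReal.ofReal (C * dist x y) :=
  iSup₂_le fun ε hε => hch ε hε x y

theorem ChainCondition.chainSupDist_ne_top (hch : ChainCondition X C) (x y : X) :
    chainSupDist x y ≠ ⊤ :=
  ne_top_of_le_ne_top ENNReal.ofReal_ne_top (hch.chainSupDist_le x y)

theorem ChainCondition.dist_le_toReal_chainSupDist (hch : ChainCondition X C) (x y : X) :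
    dist x y ≤ (chainSupDist x y).toReal :=
  (ENNReal.ofReal_le_iff_le_toReal (hch.chainSupDist_ne_top x y)).1 ofReal_dist_le_chainSupDist

theorem ChainCondition.toReal_chainSupDist_le (hch : ChainCondition X C) (x y : X) :
    (chainSupDist x y).toReal ≤ C * dist x y := by
  refine ENNReal.toReal_le_of_le_ofReal ?_ (hch.chainSupDist_le x y)
  rcases ENNReal.ofReal_le_ofReal_iff'.1
    (ofReal_dist_le_chainSupDist.trans (hch.chainSupDist_le x y)) with h | h
  · exact dist_nonneg.trans h
  · rw [le_antisymm h dist_nonneg, mul_zero]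

theorem ChainCondition.toReal_chainSupDist_triangle (hch : ChainCondition X C) (x y z : X) :
    (chainSupDist x z).toReal ≤ (chainSupDist x y).toReal + (chainSupDist y z).toReal := by
  rw [← ENNReal.toReal_add (hch.chainSupDist_ne_top x y) (hch.chainSupDist_ne_top y z)]
  exact ENNReal.toReal_mono (ENNReal.add_ne_top.2 ⟨hch.chainSupDist_ne_top x y,
    hch.chainSupDist_ne_top y z⟩) (chainSupDist_triangle x y z)

theorem ChainCondition.chainSupDist_le_of_tendsto (hch : ChainCondition X C) {w : X}
    {z : ℕ → X} {ε b : ℕ → ℝ} {B : ℝ} (hz : Tendsto z atTop (𝓝 w)) (hε0 : ∀ n, 0 < ε n)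
    (hε : Tendsto ε atTop (𝓝 0)) (hb : Tendsto b atTop (𝓝 B))
    (h : ∀ n, chainDist dist (ε n) x (z n) ≤ ENNReal.ofReal (b n)) :
    chainSupDist x w ≤ ENNReal.ofReal B := by
  refine iSup₂_le fun δ hδ => ?_
  have hlim : Tendsto (fun n => ENNReal.ofReal (b n) + ENNReal.ofReal (C * dist (z n) w))
      atTop (𝓝 (ENNReal.ofReal B + ENNReal.ofReal (C * 0))) :=
    (ENNReal.tendsto_ofReal hb).add
      (ENNReal.tendsto_ofReal ((tendsto_iff_dist_tendsto_zero.1 hz).const_mul C))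
  rw [mul_zero, ENNReal.ofReal_zero, add_zero] at hlim
  refine ge_of_tendsto hlim ((hε.eventually (gt_mem_nhds hδ)).mono fun n hn => ?_)
  calc chainDist dist δ x w ≤ chainDist dist δ x (z n) + chainDist dist δ (z n) w :=
        chainDist_triangle hδ _ _ _
    _ ≤ ENNReal.ofReal (b n) + ENNReal.ofReal (C * dist (z n) w) :=
        add_le_add ((chainDist_anti (hε0 n) hn.le).trans (h n)) (hch δ hδ _ _)

theorem ChainCondition.exists_chainSupDist_le_half [ProperSpace X] (hch : ChainCondition X C)
    (x y : X) : ∃ w, chainSupDist x w ≤ chainSupDist x y / 2 ∧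
      chainSupDist w y ≤ chainSupDist x y / 2 := by
  set D := (chainSupDist x y).toReal
  have hD0 : 0 ≤ D := ENNReal.toReal_nonneg
  have hD : chainSupDist x y = ENNReal.ofReal D :=
    (ENNReal.ofReal_toReal (hch.chainSupDist_ne_top x y)).symm
  have hD2 : chainSupDist x y / 2 = ENNReal.ofReal (D / 2) := by
    rw [hD, ENNReal.ofReal_div_of_pos two_pos, ENNReal.ofReal_ofNat]
  set ε : ℕ → ℝ := fun n => 1 / (n + 1)
  have hε0 : ∀ n, 0 < ε n := fun n => Nat.one_div_pos_of_nat
  have hε1 : ∀ n, ε n ≤ 1 := fun n => div_le_one_of_le₀ (by simp) (by positivity)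
  have hε : Tendsto ε atTop (𝓝 0) := tendsto_one_div_add_atTop_nhds_zero_nat
  have hz : ∀ n, ∃ z, chainDist dist (ε n) x z ≤ ENNReal.ofReal ((D + ε n) / 2) ∧
      chainDist dist (ε n) z y ≤ ENNReal.ofReal ((D + ε n) / 2 + ε n) := fun n =>
    exists_chainDist_le_half (hε0 n) <| (chainDist_le_chainSupDist (hε0 n)).trans_lt <| by
      rw [hD, ENNReal.ofReal_lt_ofReal_iff (by linarith [hε0 n])]
      linarith [hε0 n]
  choose z hxz hzy using hz
  have hz_ball : ∀ n, z n ∈ closedBall x ((D + 1) / 2) := fun n => by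
    rw [mem_closedBall, dist_comm]
    have := (ofReal_dist_le_chainDist.trans (hxz n))
    rw [ENNReal.ofReal_le_ofReal_iff (by linarith [hε0 n])] at this
    linarith [hε1 n]
  obtain ⟨w, -, φ, hφ, hzw⟩ := (isCompact_closedBall x ((D + 1) / 2)).tendsto_subseq hz_ball
  have hεφ : Tendsto (ε ∘ φ) atTop (𝓝 0) := hε.comp hφ.tendsto_atTop
  have hlim : Tendsto (fun n => (D + ε (φ n)) / 2) atTop (𝓝 (D / 2)) := by
    simpa using (hεφ.const_add D).div_const 2
  refine ⟨w, hD2 ▸ hch.chainSupDist_le_of_tendsto hzw (fun n => hε0 (φ n)) hεφ hlim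
    fun n => hxz (φ n), ?_⟩
  rw [chainSupDist_comm, hD2]
  refine hch.chainSupDist_le_of_tendsto hzw (fun n => hε0 (φ n)) hεφ
    (by simpa using hlim.add hεφ) fun n => ?_
  rw [chainDist_comm (hε0 (φ n))]
  exact hzy (φ n)

theorem ChainCondition.exists_midpoint [ProperSpace X] (hch : ChainCondition X C) (x y : X) :
    ∃ w, (chainSupDist x w).toReal = (chainSupDist x y).toReal / 2 ∧
      (chainSupDist w y).toReal = (chainSupDist x y).toReal / 2 := by
  obtain ⟨w, hxw, hwy⟩ := hch.exists_chainSupDist_le_half x y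
  have hne := ENNReal.div_ne_top (hch.chainSupDist_ne_top x y) two_ne_zero
  have h₁ := ENNReal.toReal_mono hne hxw
  have h₂ := ENNReal.toReal_mono hne hwy
  rw [ENNReal.toReal_div, ENNReal.toReal_ofNat] at h₁ h₂
  have h₃ := hch.toReal_chainSupDist_triangle x w y
  exact ⟨w, by linarith, by linarith⟩

end ChainSupDist

theorem dist_eq_of_dist_succ_le_of_le_dist {Y : Type*} [PseudoMetricSpace Y] (f : ℕ → Y)
    {N : ℕ} {δ : ℝ}
    (hstep : ∀ i < N, dist (f i) (f (i + 1)) ≤ δ) (hend : N * δ ≤ dist (f 0) (f N))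
    {k l : ℕ} (hk : k ≤ N) (hl : l ≤ N) : dist (f k) (f l) = |(k : ℝ) - l| * δ := by
  wlog hkl : k ≤ l generalizing k l
  · rw [dist_comm, abs_sub_comm]
    exact this hl hk (by omega)
  have upper : ∀ a b, a ≤ b → b ≤ N → dist (f a) (f b) ≤ (b - a : ℝ) * δ := fun a b hab hb => by
    refine (dist_le_Ico_sum_dist f hab).trans ((sum_le_card_nsmul _ _ δ fun i hi => ?_).trans ?_)
    · exact hstep i (by simp at hi; omega)
    · rw [Nat.card_Ico, nsmul_eq_mul, Nat.cast_sub hab]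
  have hN := (hend.trans (dist_triangle4 (f 0) (f k) (f l) (f N)))
  have h₁ := upper 0 k (Nat.zero_le k) hk
  have h₂ := upper l N hl le_rfl
  rw [abs_of_nonpos (sub_nonpos.2 (by exact_mod_cast hkl)), neg_sub]
  push_cast at h₁
  linarith [upper k l hkl hl]

section Dyadic

variable {Y : Type*} (mid : Y → Y → Y) (x y : Y)

/-- `dyadicSeq mid x y n k`, for `k ≤ 2 ^ n`, is the point of parameter `k / 2 ^ n` on the
segment from `x` to `y` obtained by `n` rounds of taking midpoints with `mid`. -/
def dyadicSeq : ℕ → ℕ → Y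
  | 0, k => if k = 0 then x else y
  | n + 1, k => if k % 2 = 0 then dyadicSeq n (k / 2)
      else mid (dyadicSeq n (k / 2)) (dyadicSeq n (k / 2 + 1))

theorem dyadicSeq_two_mul (n j : ℕ) :
    dyadicSeq mid x y (n + 1) (2 * j) = dyadicSeq mid x y n j := by
  simp [dyadicSeq]

theorem dyadicSeq_two_mul_add_one (n j : ℕ) :
    dyadicSeq mid x y (n + 1) (2 * j + 1) =
      mid (dyadicSeq mid x y n j) (dyadicSeq mid x y n (j + 1)) := by
  simp [dyadicSeq, Nat.add_mod, show (2 * j + 1) / 2 = j by omega]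

theorem dyadicSeq_zero (n : ℕ) : dyadicSeq mid x y n 0 = x := by
  induction n with
  | zero => simp [dyadicSeq]
  | succ n ih => exact (dyadicSeq_two_mul mid x y n 0).trans ih

theorem dyadicSeq_two_pow (n : ℕ) : dyadicSeq mid x y n (2 ^ n) = y := by
  induction n with
  | zero => simp [dyadicSeq]
  | succ n ih => rw [pow_succ', dyadicSeq_two_mul, ih]

theorem dyadicSeq_add_mul_two_pow (n p k : ℕ) :
    dyadicSeq mid x y (n + p) (k * 2 ^ p) = dyadicSeq mid x y n k := by
  induction p with
  | zero => simp
  | succ p ih => rw [← ih, ← add_assoc, pow_succ', mul_left_comm, dyadicSeq_two_mul]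

end Dyadic

section DyadicDist

variable {Y : Type*} [PseudoMetricSpace Y] {mid : Y → Y → Y}

theorem dist_dyadicSeq_succ (hmid₁ : ∀ a b, dist a (mid a b) = dist a b / 2)
    (hmid₂ : ∀ a b, dist (mid a b) b = dist a b / 2) (x y : Y) (n : ℕ) : ∀ k < 2 ^ n,
    dist (dyadicSeq mid x y n k) (dyadicSeq mid x y n (k + 1)) = dist x y / 2 ^ n := by
  induction n with
  | zero => intro k hk; simp [show k = 0 by simpa using hk, dyadicSeq]
  | succ n ih =>
    intro k hk
    obtain ⟨j, rfl | rfl⟩ := Nat.even_or_odd' k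
    · rw [dyadicSeq_two_mul_add_one, dyadicSeq_two_mul, hmid₁, ih j (by omega), pow_succ]
      ring
    · rw [show 2 * j + 1 + 1 = 2 * (j + 1) by ring, dyadicSeq_two_mul_add_one, dyadicSeq_two_mul,
        hmid₂, ih j (by omega), pow_succ]
      ring

theorem dist_dyadicSeq (hmid₁ : ∀ a b, dist a (mid a b) = dist a b / 2)
    (hmid₂ : ∀ a b, dist (mid a b) b = dist a b / 2) (x y : Y) {n p k l : ℕ}
    (hk : k ≤ 2 ^ n) (hl : l ≤ 2 ^ p) :
    dist (dyadicSeq mid x y n k) (dyadicSeq mid x y p l) =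
      |(k : ℝ) / 2 ^ n - l / 2 ^ p| * dist x y := by
  -- at the common level `n + p` the points form a chain of equal steps from `x` to `y`
  rw [← dyadicSeq_add_mul_two_pow mid x y n p k, ← dyadicSeq_add_mul_two_pow mid x y p n l,
    add_comm p n]
  have hk' : k * 2 ^ p ≤ 2 ^ (n + p) := by rw [pow_add]; exact Nat.mul_le_mul_right _ hk
  have hl' : l * 2 ^ n ≤ 2 ^ (n + p) := by
    rw [pow_add, mul_comm (2 ^ n)]; exact Nat.mul_le_mul_right _ hl
  have hend : ((2 ^ (n + p) : ℕ) : ℝ) * (dist x y / 2 ^ (n + p)) ≤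
      dist (dyadicSeq mid x y (n + p) 0) (dyadicSeq mid x y (n + p) (2 ^ (n + p))) := by
    rw [dyadicSeq_zero, dyadicSeq_two_pow, Nat.cast_pow, Nat.cast_ofNat,
      mul_div_cancel₀ _ (by positivity)]
  have hscale : (k : ℝ) / 2 ^ n - l / 2 ^ p =
      (((k * 2 ^ p : ℕ) : ℝ) - (l * 2 ^ n : ℕ)) / 2 ^ (n + p) := by
    push_cast; rw [pow_add]; field_simp
  rw [dist_eq_of_dist_succ_le_of_le_dist (dyadicSeq mid x y (n + p))
      (fun i hi => (dist_dyadicSeq_succ hmid₁ hmid₂ x y (n + p) i hi).le) hend hk' hl',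
    hscale, abs_div, abs_of_pos (by positivity : (0 : ℝ) < 2 ^ (n + p))]
  ring

end DyadicDist

theorem tendsto_nat_floor_mul_two_pow_div {t : ℝ} (ht : 0 ≤ t) :
    Tendsto (fun n : ℕ => (⌊t * 2 ^ n⌋₊ : ℝ) / 2 ^ n) atTop (𝓝 t) :=
  (tendsto_nat_floor_mul_div_atTop ht).comp (tendsto_pow_atTop_atTop_of_one_lt one_lt_two)

theorem nat_floor_mul_two_pow_le {t : ℝ} (ht : t ≤ 1) (n : ℕ) : ⌊t * 2 ^ n⌋₊ ≤ 2 ^ n :=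
  Nat.floor_le_of_le (by push_cast; nlinarith [pow_pos (two_pos : (0 : ℝ) < 2) n])

/-- Menger: `γ t` is the limit of the dyadic points of parameter `⌊t 2ⁿ⌋ / 2ⁿ`. -/
theorem isGeodesicDist_dist_of_exists_midpoint {Y : Type*} [MetricSpace Y] [CompleteSpace Y]
    (h : ∀ x y : Y, ∃ z, dist x z = dist x y / 2 ∧ dist z y = dist x y / 2) :
    IsGeodesicDist (dist : Y → Y → ℝ) := by
  choose mid hmid₁ hmid₂ using h
  intro x y
  have : Nonempty Y := ⟨x⟩
  set P : ℝ → ℕ → Y := fun t n => dyadicSeq mid x y n ⌊t * 2 ^ n⌋₊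
  have hP : ∀ s ∈ Set.Icc (0 : ℝ) 1, ∀ t ∈ Set.Icc (0 : ℝ) 1, ∀ n p, dist (P s n) (P t p) =
      |(⌊s * 2 ^ n⌋₊ : ℝ) / 2 ^ n - ⌊t * 2 ^ p⌋₊ / 2 ^ p| * dist x y :=
    fun s hs t ht n p => dist_dyadicSeq hmid₁ hmid₂ x y (nat_floor_mul_two_pow_le hs.2 n)
      (nat_floor_mul_two_pow_le ht.2 p)
  have hlim : ∀ t ∈ Set.Icc (0 : ℝ) 1, Tendsto (P t) atTop (𝓝 (limUnder atTop (P t))) := by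
    intro t ht
    refine CauchySeq.tendsto_limUnder ?_
    obtain ⟨b, -, hb, hb0⟩ :=
      cauchySeq_iff_le_tendsto_0.1 (tendsto_nat_floor_mul_two_pow_div ht.1).cauchySeq
    refine cauchySeq_of_le_tendsto_0 (fun N => b N * dist x y) (fun n p N hn hp => ?_)
      (by simpa using hb0.mul_const (dist x y))
    rw [hP t ht t ht]
    exact mul_le_mul_of_nonneg_right (hb n p N hn hp) dist_nonneg
  have hP0 : ∀ n, P 0 n = x := fun n => by simp [P, dyadicSeq_zero]
  have hP1 : ∀ n, P 1 n = y := fun n => by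
    have : ⌊(1 : ℝ) * 2 ^ n⌋₊ = 2 ^ n := by
      rw [one_mul]; exact_mod_cast Nat.floor_natCast (R := ℝ) (2 ^ n)
    simp only [P, this, dyadicSeq_two_pow]
  refine ⟨fun t => limUnder atTop (P t), ?_, ?_, fun s hs t ht => ?_⟩
  · exact tendsto_nhds_unique (hlim 0 (by simp)) (funext hP0 ▸ tendsto_const_nhds)
  · exact tendsto_nhds_unique (hlim 1 (by simp)) (funext hP1 ▸ tendsto_const_nhds)
  · refine tendsto_nhds_unique ((hlim s hs).dist (hlim t ht)) ?_
    simp only [hP s hs t ht]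
    exact (((tendsto_nat_floor_mul_two_pow_div hs.1).sub
      (tendsto_nat_floor_mul_two_pow_div ht.1)).abs).mul_const _

theorem isMetricDist_dist {Y : Type*} [MetricSpace Y] : IsMetricDist (dist : Y → Y → ℝ) :=
  ⟨dist_comm, fun _ _ => dist_eq_zero, dist_triangle⟩

/-- A type synonym, so that `X` can carry the metric `chainSupDist` next to its own metric. -/
def ChainMetric (X : Type*) := X

section ChainMetric

variable {X : Type*} [MetricSpace X] {C : ℝ}

noncomputable abbrev ChainCondition.metricSpace (hch : ChainCondition X C) :
    MetricSpace (ChainMetric X) where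
  dist x y := (chainSupDist (X := X) x y).toReal
  dist_self x := by rw [chainSupDist_self (X := X) x, ENNReal.toReal_zero]
  dist_comm x y := by rw [chainSupDist_comm (X := X) x y]
  dist_triangle := hch.toReal_chainSupDist_triangle
  eq_of_dist_eq_zero {x y} h :=
    (dist_le_zero (γ := X)).1 ((hch.dist_le_toReal_chainSupDist (X := X) x y).trans_eq h)

theorem ChainCondition.isMetricDist (hch : ChainCondition X C) :
    IsMetricDist fun x y : X => (chainSupDist x y).toReal :=
  letI := hch.metricSpace
  isMetricDist_dist (Y := ChainMetric X)

theorem ChainCondition.completeSpace [ProperSpace X] (hch : ChainCondition X C) :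
    letI := hch.metricSpace
    CompleteSpace (ChainMetric X) := by
  let _ := hch.metricSpace
  refine Metric.complete_of_cauchySeq_tendsto fun u hu => ?_
  obtain ⟨b, -, hb, hb0⟩ := cauchySeq_iff_le_tendsto_0.1 hu
  have hu' : CauchySeq (α := X) u := cauchySeq_of_le_tendsto_0 b
    (fun n m N hn hm => (hch.dist_le_toReal_chainSupDist (u n) (u m)).trans (hb n m N hn hm)) hb0
  obtain ⟨a, ha⟩ := cauchySeq_tendsto_of_complete hu'
  refine ⟨a, tendsto_iff_dist_tendsto_zero.2 (squeeze_zero (fun _ => dist_nonneg)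
    (fun n => hch.toReal_chainSupDist_le (u n) a) ?_)⟩
  simpa using (tendsto_iff_dist_tendsto_zero.1 ha).const_mul C

theorem ChainCondition.isGeodesicDist [ProperSpace X] (hch : ChainCondition X C) :
    IsGeodesicDist fun x y : X => (chainSupDist x y).toReal :=
  letI := hch.metricSpace
  have := hch.completeSpace
  isGeodesicDist_dist_of_exists_midpoint (Y := ChainMetric X) hch.exists_midpoint

end ChainMetric

theorem chainDist_le_of_isGeodesicDist {X : Type*} [PseudoMetricSpace X] {ρ : X → X → ℝ}
    {K ε : ℝ} (hgeo : IsGeodesicDist ρ) (hK : ∀ x y, dist x y ≤ K * ρ x y) (hε : 0 < ε)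
    (x y : X) : chainDist dist ε x y ≤ ENNReal.ofReal (K * ρ x y) := by
  obtain ⟨γ, rfl, rfl, hγ⟩ := hgeo x y
  set N := ⌊K * ρ (γ 0) (γ 1) / ε⌋₊ + 1
  have hN : (0 : ℝ) < N := by positivity
  have hKN : K * ρ (γ 0) (γ 1) / N < ε := by
    rw [div_lt_iff₀ hN, ← div_lt_iff₀' hε]
    exact_mod_cast Nat.lt_floor_add_one _
  have hstep : ∀ i < N, dist (γ (i / N)) (γ ((i + 1 : ℕ) / N)) ≤ K * ρ (γ 0) (γ 1) / N := by
    intro i hi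
    have hmem : ∀ j ≤ N, (j : ℝ) / N ∈ Set.Icc (0 : ℝ) 1 := fun j hj =>
      ⟨by positivity, div_le_one_of_le₀ (by exact_mod_cast hj) hN.le⟩
    refine (hK _ _).trans_eq ?_
    rw [hγ _ (hmem i hi.le) _ (hmem (i + 1) hi),
      show (i : ℝ) / N - ((i + 1 : ℕ) : ℝ) / N = -(1 / N) by push_cast; ring,
      abs_neg, abs_of_pos (by positivity)]
    ring
  have := chainDist_le_sum hε (fun i : ℕ => γ (i / N)) N fun i hi => (hstep i hi).trans_lt hKN
  simp only [CharP.cast_eq_zero, zero_div, div_self hN.ne'] at this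
  refine this.trans (ENNReal.ofReal_le_ofReal ?_)
  refine (sum_le_card_nsmul _ _ _ fun i hi => hstep i (mem_range.1 hi)).trans_eq ?_
  rw [card_range, nsmul_eq_mul]
  field_simp

theorem properSpace_of_isCompact_closure_ball {X : Type*} [PseudoMetricSpace X]
    (h : ∀ (x : X) (r : ℝ), IsCompact (closure (ball x r))) : ProperSpace X :=
  ⟨fun x r => (h x (r + 1)).of_isClosed_subset isClosed_closedBall
    ((closedBall_subset_ball (lt_add_one r)).trans subset_closure)⟩

/-- Proposition A.1: for a metric space in which all open balls are
relatively compact, the chain condition holds if and only if the metric is bi-Lipschitz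
equivalent to a geodesic metric. -/
theorem chain_condition_iff_biLipschitz_geodesic {X : Type*} [MetricSpace X]
    (hrel : ∀ (x : X) (r : ℝ), IsCompact (closure (Metric.ball x r))) :
    (∃ C : ℝ, 1 ≤ C ∧ ∀ ε : ℝ, 0 < ε → ∀ x y : X,
        chainDist dist ε x y ≤ ENNReal.ofReal (C * dist x y)) ↔
      (∃ C : ℝ, 1 ≤ C ∧ ∃ ρ : X → X → ℝ, IsMetricDist ρ ∧ IsGeodesicDist ρ ∧
        ∀ x y : X, C⁻¹ * dist x y ≤ ρ x y ∧ ρ x y ≤ C * dist x y) := by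
  have := properSpace_of_isCompact_closure_ball hrel
  constructor
  · rintro ⟨C, hC, hch : ChainCondition X C⟩
    refine ⟨C, hC, fun x y => (chainSupDist x y).toReal, hch.isMetricDist, hch.isGeodesicDist,
      fun x y => ⟨?_, hch.toReal_chainSupDist_le x y⟩⟩
    calc C⁻¹ * dist x y ≤ dist x y := mul_le_of_le_one_left dist_nonneg (inv_le_one_of_one_le₀ hC)
      _ ≤ (chainSupDist x y).toReal := hch.dist_le_toReal_chainSupDist x y
  · rintro ⟨C, hC, ρ, -, hgeo, hρ⟩
    have hC₀ : 0 < C := zero_lt_one.trans_le hC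
    refine ⟨C * C, one_le_mul_of_one_le_of_one_le hC hC, fun ε hε x y => ?_⟩
    refine (chainDist_le_of_isGeodesicDist (K := C) hgeo (fun a b => ?_) hε x y).trans
      (ENNReal.ofReal_le_ofReal ?_)
    · exact (inv_mul_le_iff₀ hC₀).1 (hρ a b).1
    · rw [mul_assoc]
      exact mul_le_mul_of_nonneg_left (hρ x y).2 hC₀.le
end

section
/- Let (X,d) be a metric space and suppose there exist C ≥ 1 and a geodesic metric ρ on X with C^{-1} d(x,y) ≤ ρ(x,y) ≤ C d(x,y) for all x,y ∈ X. Then d_ε(x,y) ≤ C² d(x,y) for all ε > 0 and all x,y ∈ X; in particular (X,d) satisfies the chain condition. -/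
open Metric ENNReal

/-- if `d` is bi-Lipschitz equivalent (with constant `C ≥ 1`) to a
geodesic metric `ρ`, then `d_ε(x,y) ≤ C² d(x,y)` for all `ε > 0` and all `x, y`;
in particular `(X,d)` satisfies the chain condition. -/
theorem chain_condition_of_biLipschitz_geodesic {X : Type*} [MetricSpace X]
    (C : ℝ) (hC : 1 ≤ C) (ρ : X → X → ℝ) (hmet : IsMetricDist ρ)
    (hgeo : IsGeodesicDist ρ)
    (hbi : ∀ x y : X, C⁻¹ * dist x y ≤ ρ x y ∧ ρ x y ≤ C * dist x y) :
    (∀ ε : ℝ, 0 < ε → ∀ x y : X,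
      chainDist dist ε x y ≤ ENNReal.ofReal (C ^ 2 * dist x y)) ∧
    (∃ C' : ℝ, 1 ≤ C' ∧ ∀ ε : ℝ, 0 < ε → ∀ x y : X,
      chainDist dist ε x y ≤ ENNReal.ofReal (C' * dist x y)) := by

  have hC0 : (0:ℝ) < C := lt_of_lt_of_le one_pos hC
  have main : ∀ ε : ℝ, 0 < ε → ∀ x y : X,
      chainDist dist ε x y ≤ ENNReal.ofReal (C ^ 2 * dist x y) := by
    intro ε hε x y
    obtain ⟨γ, hγ0, hγ1, hγ⟩ := hgeo x y
    set L := ρ x y with hL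
    have hdρ : ∀ a b : X, dist a b ≤ C * ρ a b := by
      intro a b
      have h := mul_le_mul_of_nonneg_left (hbi a b).1 hC0.le
      rwa [← mul_assoc, mul_inv_cancel₀ hC0.ne', one_mul] at h
    have hL0 : (0:ℝ) ≤ L := le_trans (by positivity) (hbi x y).1
    have hLd : L ≤ C * dist x y := (hbi x y).2
    obtain ⟨N, hN⟩ := exists_nat_gt (C * L / ε)
    set M : ℕ := N + 1 with hM
    have hMR : (0:ℝ) < (M:ℝ) := by positivity
    have hkey : C * L / M < ε := by
      rw [div_lt_iff₀ hMR]
      have h1 : C * L / ε < (M:ℝ) := lt_of_lt_of_le hN (by exact_mod_cast Nat.le_succ N)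
      have := mul_lt_mul_of_pos_right h1 hε
      rw [div_mul_cancel₀ _ hε.ne'] at this
      linarith
    have hmem : ∀ i : ℕ, i ≤ M → ((i:ℝ)/M) ∈ Set.Icc (0:ℝ) 1 := by
      intro i hi
      constructor
      · positivity
      · rw [div_le_one hMR]; exact_mod_cast hi
    have hstep : ∀ i : ℕ, i < M →
        dist (γ ((i:ℝ)/M)) (γ (((i:ℝ)+1)/M)) ≤ C * L / M := by
      intro i hi
      have h1 : ((i:ℝ)+1)/M = ((i+1:ℕ):ℝ)/M := by push_cast; ring
      have h2 := hγ ((i:ℝ)/M) (hmem i hi.le) (((i:ℝ)+1)/M)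
        (by rw [h1]; exact hmem (i+1) hi)
      have habs : |(i:ℝ)/M - ((i:ℝ)+1)/M| = 1/M := by
        rw [div_sub_div_same, abs_div, abs_of_pos hMR]
        norm_num
      calc dist (γ ((i:ℝ)/M)) (γ (((i:ℝ)+1)/M)) ≤ C * ρ (γ ((i:ℝ)/M)) (γ (((i:ℝ)+1)/M)) :=
            hdρ _ _
        _ = C * (|(i:ℝ)/M - ((i:ℝ)+1)/M| * L) := by rw [h2]
        _ = C * L / M := by rw [habs]; ring
    refine le_trans (iInf_le _ ⟨(M, fun i => γ ((i:ℝ)/M)), Nat.succ_pos N, ?_, ?_, ?_⟩) ?_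
    · calc ∑ i ∈ Finset.range M, ENNReal.ofReal
            (dist (γ ((i:ℝ)/M)) (γ (((i+1:ℕ):ℝ)/M)))
          ≤ ∑ _i ∈ Finset.range M, ENNReal.ofReal (C * L / M) := by
            refine Finset.sum_le_sum fun i hi => ENNReal.ofReal_le_ofReal ?_
            have := hstep i (Finset.mem_range.mp hi)
            push_cast at this ⊢
            exact this
        _ = M * ENNReal.ofReal (C * L / M) := by
            rw [Finset.sum_const, Finset.card_range, nsmul_eq_mul]
        _ = ENNReal.ofReal ((M:ℝ) * (C * L / M)) := by
            rw [ENNReal.ofReal_mul (by positivity), ENNReal.ofReal_natCast]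
        _ = ENNReal.ofReal (C * L) := by rw [mul_div_cancel₀ _ hMR.ne']
        _ ≤ ENNReal.ofReal (C ^ 2 * dist x y) := by
            apply ENNReal.ofReal_le_ofReal
            calc C * L ≤ C * (C * dist x y) := by
                  exact mul_le_mul_of_nonneg_left hLd hC0.le
              _ = C ^ 2 * dist x y := by ring
    · show γ (((0:ℕ):ℝ)/M) = x
      rw [Nat.cast_zero, zero_div]; exact hγ0
    · show γ (((M:ℕ):ℝ)/M) = y
      rw [div_self hMR.ne']; exact hγ1
    · intro i hi
      refine lt_of_le_of_lt ?_ hkey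
      have := hstep i hi
      show dist (γ ((i:ℝ)/M)) (γ (((i+1:ℕ):ℝ)/M)) ≤ C * L / M
      push_cast [hM] at this ⊢
      exact this
  exact ⟨main, C ^ 2, one_le_pow₀ hC, main⟩
end

section
/- Let Ψ : [0,∞) → [0,∞) be a homeomorphism such that C_Ψ^{-1} (R/r)^{β_0} ≤ Ψ(R)/Ψ(r) ≤ C_Ψ (R/r)^{β_1} for all 0 < r ≤ R, for some constants 1 < β_0 ≤ β_1 and C_Ψ ≥ 1. Define Φ(R,t) := sup_{r>0} ( R/r − t/Ψ(r) ) for (R,t) ∈ [0,∞)×(0,∞). Then Φ is a finite, [0,∞)-valued, lower semi-continuous function on [0,∞)×(0,∞), and for any R,t ∈ (0,∞): Φ(0,t) = 0, the function Φ(·,t) is strictly increasing on [0,∞), and the function Φ(R,·) is strictly decreasing on (0,∞). -/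
open Real


/-- `Φ(R,t) := sup_{r>0} (R/r − t/Ψ(r))`. -/
noncomputable def PhiOf (Ψ : ℝ → ℝ) (R t : ℝ) : ℝ :=
  ⨆ r : {r : ℝ // 0 < r}, (R / r.1 - t / Ψ r.1)

/-- Remark 2.4-(a): if `Ψ` is a homeomorphism of `[0,∞)` satisfying
the two-sided power-scaling estimate with exponents `1 < β₀ ≤ β₁`, then
`Φ(R,t) = sup_{r>0}(R/r − t/Ψ(r))` is a finite (i.e. the supremand is bounded above),
`[0,∞)`-valued, lower semi-continuous function on `[0,∞) × (0,∞)`; moreover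
`Φ(0,t) = 0`, `Φ(·,t)` is strictly increasing on `[0,∞)` and `Φ(R,·)` is strictly
decreasing on `(0,∞)`. -/
theorem PhiOf_properties (Ψ : ℝ → ℝ) (hΨ0 : Ψ 0 = 0)
    (hΨcont : ContinuousOn Ψ (Set.Ici 0))
    (hΨmono : StrictMonoOn Ψ (Set.Ici 0))
    (hΨsurj : Set.SurjOn Ψ (Set.Ici 0) (Set.Ici 0))
    (β₀ β₁ CΨ : ℝ) (hβ₀ : 1 < β₀) (hβ : β₀ ≤ β₁) (hCΨ : 1 ≤ CΨ)
    (hreg : ∀ r R : ℝ, 0 < r → r ≤ R →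
      CΨ⁻¹ * (R / r) ^ β₀ ≤ Ψ R / Ψ r ∧ Ψ R / Ψ r ≤ CΨ * (R / r) ^ β₁) :
    (∀ R t : ℝ, 0 ≤ R → 0 < t →
      BddAbove (Set.range fun r : {r : ℝ // 0 < r} => (R / r.1 - t / Ψ r.1)) ∧
      0 ≤ PhiOf Ψ R t) ∧
    LowerSemicontinuousOn (fun p : ℝ × ℝ => PhiOf Ψ p.1 p.2)
      (Set.Ici 0 ×ˢ Set.Ioi 0) ∧
    (∀ t : ℝ, 0 < t → PhiOf Ψ 0 t = 0) ∧
    (∀ t : ℝ, 0 < t → StrictMonoOn (fun R => PhiOf Ψ R t) (Set.Ici 0)) ∧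
    (∀ R : ℝ, 0 < R → StrictAntiOn (fun t => PhiOf Ψ R t) (Set.Ioi 0)) := by
  haveI : Nonempty {r : ℝ // 0 < r} := ⟨⟨1, one_pos⟩⟩
  have hCpos : 0 < CΨ := lt_of_lt_of_le one_pos hCΨ
  have hΨpos : ∀ r : ℝ, 0 < r → 0 < Ψ r := by
    intro r hr
    have := hΨmono Set.self_mem_Ici (Set.mem_Ici.mpr hr.le) hr
    rwa [hΨ0] at this
  have hΨ1 : 0 < Ψ 1 := hΨpos 1 one_pos
  have hb : (0:ℝ) < β₀ - 1 := by linarith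
  -- lower power bound for r ≥ 1
  have hlow : ∀ r : ℝ, 1 ≤ r → Ψ 1 / CΨ * r ^ β₀ ≤ Ψ r := by
    intro r hr
    have h := (hreg 1 r one_pos hr).1
    rw [div_one] at h
    rw [le_div_iff₀ hΨ1] at h
    calc Ψ 1 / CΨ * r ^ β₀ = CΨ⁻¹ * r ^ β₀ * Ψ 1 := by ring
      _ ≤ Ψ r := h
  -- upper power bound for 0 < r ≤ 1
  have hupp : ∀ r : ℝ, 0 < r → r ≤ 1 → Ψ r ≤ CΨ * Ψ 1 * r ^ β₀ := by
    intro r hr hr1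
    have h := (hreg r 1 hr hr1).1
    have hΨr := hΨpos r hr
    have hA : (0:ℝ) < (1 / r) ^ β₀ := rpow_pos_of_pos (by positivity) _
    have hB : (0:ℝ) < r ^ β₀ := rpow_pos_of_pos hr _
    have hAB : (1 / r) ^ β₀ * r ^ β₀ = 1 := by
      rw [← Real.mul_rpow (by positivity) hr.le, one_div_mul_cancel hr.ne', Real.one_rpow]
    rw [le_div_iff₀ hΨr] at h
    -- h : CΨ⁻¹ * (1/r)^β₀ * Ψ r ≤ Ψ 1
    have h2 := mul_le_mul_of_nonneg_left h (by positivity : (0:ℝ) ≤ CΨ * r ^ β₀)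
    have hCC : CΨ * CΨ⁻¹ = 1 := mul_inv_cancel₀ hCpos.ne'
    calc Ψ r = CΨ * CΨ⁻¹ * ((1 / r) ^ β₀ * r ^ β₀) * Ψ r := by rw [hCC, hAB]; ring
      _ = CΨ * r ^ β₀ * (CΨ⁻¹ * (1 / r) ^ β₀ * Ψ r) := by ring
      _ ≤ CΨ * r ^ β₀ * Ψ 1 := h2
      _ = CΨ * Ψ 1 * r ^ β₀ := by ring
  -- growth lemma
  have hgrow : ∀ M : ℝ, 0 < M → ∃ r : ℝ, 1 ≤ r ∧ M * r < Ψ r := by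
    intro M hM
    set c := Ψ 1 / CΨ with hc
    have hcpos : 0 < c := by positivity
    set y := max 1 (M / c) with hy
    have hy1 : (1:ℝ) ≤ y := le_max_left _ _
    refine ⟨(2 * y) ^ (β₀ - 1)⁻¹, ?_, ?_⟩
    · exact Real.one_le_rpow (by linarith) (by positivity)
    · set r := (2 * y) ^ (β₀ - 1)⁻¹ with hrdef
      have hr1 : (1:ℝ) ≤ r := Real.one_le_rpow (by linarith) (by positivity)
      have hr0 : (0:ℝ) < r := lt_of_lt_of_le one_pos hr1
      have hpow : r ^ (β₀ - 1) = 2 * y :=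
        Real.rpow_inv_rpow (by positivity) hb.ne'
      have hsplit : r ^ β₀ = r ^ (β₀ - 1) * r := by
        rw [← Real.rpow_add_one hr0.ne' (β₀ - 1), sub_add_cancel]
      have h1 : c * r ^ β₀ ≤ Ψ r := hlow r hr1
      have h2 : M / c ≤ y := le_max_right _ _
      have h3 : M ≤ c * y := by
        rw [div_le_iff₀ hcpos] at h2; linarith [h2]
      have : M * r < c * (2 * y) * r := by
        have : M < c * (2 * y) := by nlinarith
        exact (mul_lt_mul_of_pos_right this hr0)
      calc M * r < c * (2 * y) * r := this
        _ = c * r ^ β₀ := by rw [hsplit, hpow]; ring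
        _ ≤ Ψ r := h1
  -- boundedness
  have hbdd : ∀ R t : ℝ, 0 ≤ R → 0 < t →
      BddAbove (Set.range fun r : {r : ℝ // 0 < r} => (R / r.1 - t / Ψ r.1)) := by
    intro R t hR ht
    rcases eq_or_lt_of_le hR with h0 | h0
    · refine ⟨0, ?_⟩
      rintro x ⟨r, rfl⟩
      have hΨr := hΨpos r.1 r.2
      simp only [← h0, zero_div, zero_sub]
      exact neg_nonpos.mpr (by positivity)
    · set c₂ := CΨ * Ψ 1 with hc₂
      have hc₂pos : 0 < c₂ := by positivity
      set ρ := min 1 ((t / (R * c₂)) ^ (β₀ - 1)⁻¹) with hρ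
      have hρpos : 0 < ρ := lt_min one_pos (rpow_pos_of_pos (by positivity) _)
      refine ⟨R / ρ, ?_⟩
      rintro x ⟨r, rfl⟩
      have hr0 := r.2
      have hΨr := hΨpos r.1 hr0
      rcases le_or_gt ρ r.1 with hge | hlt
      · have h1 : R / r.1 ≤ R / ρ := div_le_div_of_nonneg_left h0.le hρpos hge
        have : (0:ℝ) < t / Ψ r.1 := by positivity
        simp only []
        linarith
      · -- r < ρ ≤ 1
        have hr1 : r.1 ≤ 1 := le_of_lt (lt_of_lt_of_le hlt (min_le_left _ _))
        have hΨub := hupp r.1 hr0 hr1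
        have hrle : r.1 ≤ (t / (R * c₂)) ^ (β₀ - 1)⁻¹ :=
          le_of_lt (lt_of_lt_of_le hlt (min_le_right _ _))
        have hrp : r.1 ^ (β₀ - 1) ≤ t / (R * c₂) := by
          calc r.1 ^ (β₀ - 1) ≤ ((t / (R * c₂)) ^ (β₀ - 1)⁻¹) ^ (β₀ - 1) :=
                Real.rpow_le_rpow hr0.le hrle hb.le
            _ = t / (R * c₂) := Real.rpow_inv_rpow (by positivity) hb.ne'
        have hrp2 : R * c₂ * r.1 ^ (β₀ - 1) ≤ t := by
          rw [le_div_iff₀ (by positivity : (0:ℝ) < R * c₂)] at hrp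
          linarith [hrp]
        have hsplit : r.1 ^ β₀ = r.1 ^ (β₀ - 1) * r.1 := by
          rw [← Real.rpow_add_one hr0.ne' (β₀ - 1), sub_add_cancel]
        -- show R / r - t / Ψ r ≤ 0
        have hkey : R / r.1 ≤ t / Ψ r.1 := by
          rw [div_le_div_iff₀ hr0 hΨr]
          calc R * Ψ r.1 ≤ R * (c₂ * r.1 ^ β₀) := by nlinarith [hΨub]
            _ = (R * c₂ * r.1 ^ (β₀ - 1)) * r.1 := by rw [hsplit]; ring
            _ ≤ t * r.1 := mul_le_mul_of_nonneg_right hrp2 hr0.le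
        have : (0:ℝ) ≤ R / ρ := by positivity
        simp only []
        linarith
  -- positivity of Φ for R > 0
  have hΦpos : ∀ R t : ℝ, 0 < R → 0 < t → 0 < PhiOf Ψ R t := by
    intro R t hR ht
    obtain ⟨r, hr1, hr⟩ := hgrow (2 * t / R) (by positivity)
    have hr0 : (0:ℝ) < r := lt_of_lt_of_le one_pos hr1
    have hΨr := hΨpos r hr0
    have h1 : t / Ψ r < R / r := by
      rw [div_lt_div_iff₀ hΨr hr0]
      have h2 := mul_lt_mul_of_pos_left hr hR
      have h3 : R * (2 * t / R * r) = 2 * (t * r) := by field_simp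
      nlinarith [mul_pos ht hr0]
    have h2 : (0:ℝ) < R / r - t / Ψ r := by linarith
    have h3 := le_ciSup (hbdd R t hR.le ht) (⟨r, hr0⟩ : {r : ℝ // 0 < r})
    rw [PhiOf]
    exact lt_of_lt_of_le h2 h3
  -- Φ(0,t) = 0
  have hzero : ∀ t : ℝ, 0 < t → PhiOf Ψ 0 t = 0 := by
    intro t ht
    apply le_antisymm
    · apply ciSup_le
      intro r
      have hΨr := hΨpos r.1 r.2
      rw [zero_div, zero_sub]
      exact neg_nonpos.mpr (by positivity)
    · by_contra h
      push_neg at h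
      set ε := -(PhiOf Ψ 0 t) with hε
      have hεpos : 0 < ε := by linarith
      obtain ⟨r, hr1, hr⟩ := hgrow (t / ε) (by positivity)
      have hr0 : (0:ℝ) < r := lt_of_lt_of_le one_pos hr1
      have hΨr := hΨpos r hr0
      have h1 : t / ε < Ψ r := by nlinarith [mul_le_mul_of_nonneg_left hr1 (le_of_lt (by positivity : (0:ℝ) < t / ε))]
      have h2 : t / Ψ r < ε := by
        rw [div_lt_iff₀ hεpos] at h1
        rw [div_lt_iff₀ hΨr]
        linarith
      have h3 := le_ciSup (hbdd 0 t le_rfl ht) (⟨r, hr0⟩ : {r : ℝ // 0 < r})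
      simp only [PhiOf] at hε
      simp only [zero_div, zero_sub] at h3 hε
      linarith
  refine ⟨?_, ?_, hzero, ?_, ?_⟩
  · intro R t hR ht
    refine ⟨hbdd R t hR ht, ?_⟩
    rcases eq_or_lt_of_le hR with h0 | h0
    · rw [← h0, hzero t ht]
    · exact (hΦpos R t h0 ht).le
  · -- lower semicontinuity
    intro p hp c hc
    simp only [PhiOf] at hc
    obtain ⟨r, hr⟩ := exists_lt_of_lt_ciSup hc
    have hΨr := hΨpos r.1 r.2
    have hcont : Continuous (fun q : ℝ × ℝ => q.1 / r.1 - q.2 / Ψ r.1) := by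
      fun_prop
    have h1 : ∀ᶠ q in nhds p, c < q.1 / r.1 - q.2 / Ψ r.1 :=
      (hcont.tendsto p).eventually (eventually_gt_nhds hr)
    have h2 := h1.filter_mono (nhdsWithin_le_nhds (s := Set.Ici 0 ×ˢ Set.Ioi 0))
    filter_upwards [h2, eventually_mem_nhdsWithin] with q hq hqmem
    have hq1 : (0:ℝ) ≤ q.1 := hqmem.1
    have hq2 : (0:ℝ) < q.2 := hqmem.2
    have h3 := le_ciSup (hbdd q.1 q.2 hq1 hq2) r
    calc c < q.1 / r.1 - q.2 / Ψ r.1 := hq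
      _ ≤ PhiOf Ψ q.1 q.2 := h3
  · -- strict monotone in R
    intro t ht R₁ hR₁ R₂ hR₂ hlt
    simp only []
    rcases eq_or_lt_of_le (Set.mem_Ici.mp hR₁) with h0 | h0
    · rw [← h0, hzero t ht]
      exact hΦpos R₂ t (by rw [← h0] at hlt; exact hlt) ht
    · set μ := PhiOf Ψ R₁ t with hμ
      have hμpos : 0 < μ := hΦpos R₁ t h0 ht
      set δ := R₂ - R₁ with hδdef
      have hδ : 0 < δ := by simp [hδdef]; linarith
      set ε := min (μ / 2) (δ * μ / (4 * R₁)) with hεdef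
      have hε : 0 < ε := lt_min (by positivity) (by positivity)
      have hε1 : ε ≤ μ / 2 := min_le_left _ _
      have hε2 : ε ≤ δ * μ / (4 * R₁) := min_le_right _ _
      have hlt' : μ - ε < PhiOf Ψ R₁ t := by linarith
      rw [PhiOf] at hlt'
      obtain ⟨r, hr⟩ := exists_lt_of_lt_ciSup hlt'
      have hr0 := r.2
      have hΨr := hΨpos r.1 hr0
      have htΨ : (0:ℝ) < t / Ψ r.1 := by positivity
      have h1 : μ / 2 < R₁ / r.1 := by linarith
      rw [div_lt_div_iff₀ two_pos hr0] at h1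
      -- h1 : μ * r.1 < R₁ * 2
      have h2 : δ * μ / (2 * R₁) < δ / r.1 := by
        rw [div_lt_div_iff₀ (by positivity) hr0]
        nlinarith
      have h3 := le_ciSup (hbdd R₂ t (by linarith : (0:ℝ) ≤ R₂) ht) r
      have h4 : R₂ / r.1 = R₁ / r.1 + δ / r.1 := by
        rw [← add_div]; congr 1; simp [hδdef]
      rw [PhiOf]
      have h5 : δ * μ / (2 * R₁) = 2 * (δ * μ / (4 * R₁)) := by ring
      calc μ < μ - ε + δ / r.1 := by
              have : 2 * ε ≤ δ * μ / (2 * R₁) := by rw [h5]; linarith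
              linarith
        _ ≤ (R₁ / r.1 - t / Ψ r.1) + δ / r.1 := by linarith
        _ = R₂ / r.1 - t / Ψ r.1 := by rw [h4]; ring
        _ ≤ ⨆ r : {r : ℝ // 0 < r}, (R₂ / r.1 - t / Ψ r.1) := h3
  · -- strict anti in t
    intro R hR t₁ ht₁ t₂ ht₂ hlt
    simp only []
    have ht₁' : (0:ℝ) < t₁ := ht₁
    have ht₂' : (0:ℝ) < t₂ := ht₂
    set μ := PhiOf Ψ R t₂ with hμ
    have hμpos : 0 < μ := hΦpos R t₂ hR ht₂'
    set K := Ψ (2 * R / μ) with hK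
    have hKpos : 0 < K := hΨpos _ (by positivity)
    set Δ := t₂ - t₁ with hΔdef
    have hΔ : 0 < Δ := by simp [hΔdef]; linarith
    set ε := min (μ / 2) (Δ / (2 * K)) with hεdef
    have hε : 0 < ε := lt_min (by positivity) (by positivity)
    have hε1 : ε ≤ μ / 2 := min_le_left _ _
    have hε2 : ε ≤ Δ / (2 * K) := min_le_right _ _
    have hlt' : μ - ε < PhiOf Ψ R t₂ := by linarith
    rw [PhiOf] at hlt'
    obtain ⟨r, hr⟩ := exists_lt_of_lt_ciSup hlt'
    have hr0 := r.2
    have hΨr := hΨpos r.1 hr0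
    have ht₂Ψ : (0:ℝ) < t₂ / Ψ r.1 := by positivity
    have h1 : μ / 2 < R / r.1 := by linarith
    have h2 : r.1 < 2 * R / μ := by
      rw [div_lt_div_iff₀ two_pos hr0] at h1
      rw [lt_div_iff₀ hμpos]
      nlinarith
    have h3 : Ψ r.1 ≤ K :=
      hΨmono.monotoneOn (Set.mem_Ici.mpr hr0.le)
        (Set.mem_Ici.mpr (by positivity)) h2.le
    have h4 : Δ / K ≤ Δ / Ψ r.1 := div_le_div_of_nonneg_left hΔ.le hΨr h3
    have h5 := le_ciSup (hbdd R t₁ hR.le ht₁') r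
    have h6 : t₁ / Ψ r.1 = t₂ / Ψ r.1 - Δ / Ψ r.1 := by
      rw [← sub_div]; congr 1; simp [hΔdef]
    rw [PhiOf]
    calc μ < μ - ε + Δ / K := by
            have h7 : Δ / K = 2 * (Δ / (2 * K)) := by ring
            have : 2 * ε ≤ Δ / K := by rw [h7]; linarith
            linarith
      _ ≤ (R / r.1 - t₂ / Ψ r.1) + Δ / Ψ r.1 := by linarith
      _ = R / r.1 - t₁ / Ψ r.1 := by rw [h6]; ring
      _ ≤ ⨆ r : {r : ℝ // 0 < r}, (R / r.1 - t₁ / Ψ r.1) := h5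
end

section
/- Let (X,d,m) be a metric measure space satisfying the volume doubling property VD with constant C_D, let n ∈ ℕ, let N be an n^{-1}-net in (X,d), and let {φ_z}_{z∈N} be the partition of unity given by φ_z := f_{z,2/n}/∑_{w∈N} f_{w,2/n} where f_{x,r}(y) := (1 − r^{-1}d(x,y))^+. Let f : X → ℝ be a continuous function with compact support, and define f_n := ∑_{z∈N} f_{B(z,1/n)} φ_z, where f_{B(z,1/n)} := m(B(z,1/n))^{-1} ∫_{B(z,1/n)} f dm. Then: (i) sup_X |f_n| ≤ sup_X |f|; (ii) |f_n(x) − f(x)| ≤ sup{ |f(z)−f(w)| : z,w ∈ X, d(z,w) < 3/n } for every x ∈ X; (iii) there exists a constant C > 0 depending only on C_D such that |f_n(x) − f_n(y)| ≤ C n (sup_X |f|) d(x,y) for all x,y ∈ X. -/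
open Metric ENNReal MeasureTheory

/-- `f_{x,r}(y) := (1 − r⁻¹ d(x,y))⁺`. -/
noncomputable def cutFn {X : Type*} [MetricSpace X] (x : X) (r : ℝ) (y : X) : ℝ :=
  max (1 - dist x y / r) 0

/-- A set `N` is `ε`-separated if distinct points of `N` are at distance `≥ ε`. -/
def IsSeparatedSet {X : Type*} [MetricSpace X] (ε : ℝ) (N : Set X) : Prop :=
  ∀ x ∈ N, ∀ y ∈ N, x ≠ y → ε ≤ dist x y

/-- An `ε`-net: an `ε`-separated set that is maximal among `ε`-separated sets. -/
def IsNet {X : Type*} [MetricSpace X] (ε : ℝ) (N : Set X) : Prop :=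
  IsSeparatedSet ε N ∧ ∀ M : Set X, N ⊆ M → IsSeparatedSet ε M → M = N

/-- The normalizing sum `∑_{w∈N} f_{w,r}(y)`. -/
noncomputable def netSum {X : Type*} [MetricSpace X] (r : ℝ) (N : Set X) (y : X) : ℝ :=
  ∑' w : N, cutFn (w : X) r y

/-- The partition-of-unity function `φ_z = f_{z,r} / ∑_{w∈N} f_{w,r}`. -/
noncomputable def pou {X : Type*} [MetricSpace X] (r : ℝ) (N : Set X) (z x : X) : ℝ :=
  cutFn z r x / netSum r N x

/-- The average `f_{B(z,r)} := m(B(z,r))⁻¹ ∫_{B(z,r)} f dm`. -/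
noncomputable def ballAvg {X : Type*} [MetricSpace X] [MeasurableSpace X]
    (m : Measure X) (f : X → ℝ) (z : X) (r : ℝ) : ℝ :=
  (m (Metric.ball z r)).toReal⁻¹ * ∫ y in Metric.ball z r, f y ∂m

/-- The discretization `f_n := ∑_{z∈N} f_{B(z,1/n)} φ_z` of `f` at scale `1/n`. -/
noncomputable def discretize {X : Type*} [MetricSpace X] [MeasurableSpace X]
    (m : Measure X) (N : Set X) (n : ℕ) (f : X → ℝ) (x : X) : ℝ :=
  ∑' z : N, ballAvg m f (z : X) ((n : ℝ)⁻¹) * pou (2 / (n : ℝ)) N (z : X) x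

/-!
For `w ∈ N` the weights `φ_w(x)` are nonnegative, sum to one, and vanish unless `d(w, x) < 2/n`,
so `f_n(x)` is a convex combination of averages of `f` over balls `B(w, 1/n) ⊆ B(x, 3/n)`;
this gives (i) and (ii). For (iii), volume doubling and a packing argument bound the number of
net points within `2/n` of any point by `C_D⁴`. The cut-offs `f_{w,2/n}` are `n/2`-Lipschitz and
the normalising sum is at least `1/2` (some net point lies within `1/n`), so each `φ_w` is
`(2 + 8 C_D⁴) n/2`-Lipschitz, and `f_n` is locally a sum of at most `2 C_D⁴` such terms with
coefficients bounded by `sup |f|`.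
-/

section CutFn

variable {X : Type*} [MetricSpace X]

lemma cutFn_nonneg (x : X) (r : ℝ) (y : X) : 0 ≤ cutFn x r y := le_max_right _ _

lemma cutFn_le_one (x : X) {r : ℝ} (hr : 0 < r) (y : X) : cutFn x r y ≤ 1 :=
  max_le (by linarith [div_nonneg (dist_nonneg (x := x) (y := y)) hr.le]) zero_le_one

lemma cutFn_eq_zero_of_le_dist (x : X) {r : ℝ} (hr : 0 < r) {y : X} (h : r ≤ dist x y) :
    cutFn x r y = 0 :=
  max_eq_right (by linarith [(one_le_div hr).mpr h])

lemma one_half_le_cutFn (x : X) {r : ℝ} (hr : 0 < r) {y : X} (h : dist x y ≤ r / 2) :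
    1 / 2 ≤ cutFn x r y := by
  have : dist x y / r ≤ 1 / 2 := by rw [div_le_iff₀ hr]; linarith
  exact le_max_of_le_left (by linarith)

lemma abs_cutFn_sub_le (x : X) {r : ℝ} (hr : 0 < r) (y y' : X) :
    |cutFn x r y - cutFn x r y'| ≤ dist y y' / r :=
  calc |cutFn x r y - cutFn x r y'|
      ≤ |(1 - dist x y / r) - (1 - dist x y' / r)| := abs_max_sub_max_le_abs _ _ _
    _ = |(dist y' x - dist y x) / r| := by rw [dist_comm x y, dist_comm x y']; ring_nf
    _ = |dist y' x - dist y x| / r := by rw [abs_div, abs_of_pos hr]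
    _ ≤ dist y y' / r := by
        gcongr; rw [dist_comm y y']; exact abs_dist_sub_le y' y x

end CutFn

lemma IsNet.exists_dist_lt {X : Type*} [MetricSpace X] {ε : ℝ} {N : Set X} (hN : IsNet ε N)
    (hε : 0 < ε) (x : X) : ∃ z ∈ N, dist z x < ε := by
  by_contra! h
  have hsep : IsSeparatedSet ε (insert x N) := by
    rintro a (rfl | ha) b (rfl | hb) hab
    · exact absurd rfl hab
    · exact dist_comm a b ▸ h b hb
    · exact h a ha
    · exact hN.1 a ha b hb hab
  have hx : x ∈ N := hN.2 _ (Set.subset_insert x N) hsep ▸ Set.mem_insert x N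
  linarith [dist_self x ▸ h x hx]

lemma abs_div_sub_div_le {a a' b b' d L : ℝ} (ha' : 0 ≤ a') (ha'1 : a' ≤ 1) (hb : 1 / 2 ≤ b)
    (hb' : 1 / 2 ≤ b') (ha : |a - a'| ≤ d) (hbb : |b - b'| ≤ L) :
    |a / b - a' / b'| ≤ 2 * d + 4 * L := by
  have hb0 : 0 < b := by linarith
  have hb0' : 0 < b' := by linarith
  have h1 : |(a - a') / b| ≤ 2 * d := by
    rw [abs_div, abs_of_pos hb0, div_le_iff₀ hb0]
    nlinarith [abs_nonneg (a - a')]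
  have h2 : |a' * (b' - b) / (b * b')| ≤ 4 * L := by
    rw [abs_div, abs_mul, abs_of_nonneg ha', abs_of_pos (mul_pos hb0 hb0'),
      div_le_iff₀ (mul_pos hb0 hb0'), abs_sub_comm]
    nlinarith [abs_nonneg (b - b'), mul_le_mul hb hb' (by norm_num) hb0.le]
  calc |a / b - a' / b'| = |(a - a') / b + a' * (b' - b) / (b * b')| := by
        congr 1; field_simp; ring
    _ ≤ 2 * d + 4 * L := (abs_add_le _ _).trans (add_le_add h1 h2)

section PartitionOfUnity

variable {X : Type*} [MetricSpace X] {N : Set X} {r : ℝ} {x y : X} {s : Finset N}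

lemma netSum_eq_sum (hr : 0 < r) (hs : ∀ w : N, dist (w : X) x < r → w ∈ s) :
    netSum r N x = ∑ w ∈ s, cutFn (w : X) r x :=
  tsum_eq_sum fun w hw => cutFn_eq_zero_of_le_dist _ hr (not_lt.1 (mt (hs w) hw))

lemma pou_nonneg (hS : 0 ≤ netSum r N x) (z : X) : 0 ≤ pou r N z x :=
  div_nonneg (cutFn_nonneg z r x) hS

lemma sum_pou_eq_one (hr : 0 < r) (hs : ∀ w : N, dist (w : X) x < r → w ∈ s)
    (hS : 0 < netSum r N x) : ∑ w ∈ s, pou r N w x = 1 := by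
  simp only [pou, ← Finset.sum_div, ← netSum_eq_sum hr hs, div_self hS.ne']

lemma IsNet.one_half_le_netSum {ε : ℝ} (hN : IsNet ε N) (hε : 0 < ε) (hεr : 2 * ε ≤ r)
    (hs : ∀ w : N, dist (w : X) x < r → w ∈ s) : 1 / 2 ≤ netSum r N x := by
  obtain ⟨z, hzN, hz⟩ := hN.exists_dist_lt hε x
  have hr : 0 < r := by linarith
  rw [netSum_eq_sum hr hs]
  calc 1 / 2 ≤ cutFn z r x := one_half_le_cutFn z hr (by linarith)
    _ ≤ _ := Finset.single_le_sum (f := fun w : N => cutFn (w : X) r x)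
          (fun w _ => cutFn_nonneg _ _ _) (hs ⟨z, hzN⟩ (by linarith))

lemma abs_netSum_sub_le (hr : 0 < r) (hx : ∀ w : N, dist (w : X) x < r → w ∈ s)
    (hy : ∀ w : N, dist (w : X) y < r → w ∈ s) :
    |netSum r N x - netSum r N y| ≤ s.card * (dist x y / r) := by
  rw [netSum_eq_sum hr hx, netSum_eq_sum hr hy, ← Finset.sum_sub_distrib]
  calc _ ≤ ∑ w ∈ s, |cutFn (w : X) r x - cutFn (w : X) r y| := Finset.abs_sum_le_sum_abs _ _
    _ ≤ ∑ _w ∈ s, dist x y / r := Finset.sum_le_sum fun w _ => abs_cutFn_sub_le _ hr x y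
    _ = _ := by rw [Finset.sum_const, nsmul_eq_mul]

lemma abs_pou_sub_le (hr : 0 < r) (hx : ∀ w : N, dist (w : X) x < r → w ∈ s)
    (hy : ∀ w : N, dist (w : X) y < r → w ∈ s) (hSx : 1 / 2 ≤ netSum r N x)
    (hSy : 1 / 2 ≤ netSum r N y) (z : X) :
    |pou r N z x - pou r N z y| ≤ (2 + 4 * s.card) * (dist x y / r) := by
  have := abs_div_sub_div_le (cutFn_nonneg z r y) (cutFn_le_one z hr y) hSx hSy
    (abs_cutFn_sub_le z hr x y) (abs_netSum_sub_le hr hx hy)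
  rw [pou, pou]
  linarith

lemma IsNet.one_half_le_netSum_two_div {n : ℕ} (hN : IsNet (n : ℝ)⁻¹ N) (hn : 0 < n) {s : Finset N}
    (hs : ∀ w : N, dist (w : X) x < 2 / n → w ∈ s) : 1 / 2 ≤ netSum (2 / n) N x :=
  hN.one_half_le_netSum (by positivity) (div_eq_mul_inv (2 : ℝ) n).ge hs

end PartitionOfUnity

section Doubling

variable {X : Type*} [MetricSpace X] [MeasurableSpace X] {m : Measure X} {c : ℝ≥0∞}

lemma measure_ball_two_pow_mul_le
    (hVD : ∀ (x : X) (r : ℝ), 0 < r → m (ball x (2 * r)) ≤ c * m (ball x r))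
    (x : X) {r : ℝ} (hr : 0 < r) (k : ℕ) : m (ball x (2 ^ k * r)) ≤ c ^ k * m (ball x r) := by
  induction k with
  | zero => simp
  | succ k ih =>
    calc m (ball x (2 ^ (k + 1) * r)) = m (ball x (2 * (2 ^ k * r))) := by ring_nf
      _ ≤ c * m (ball x (2 ^ k * r)) := hVD x _ (by positivity)
      _ ≤ c * (c ^ k * m (ball x r)) := by gcongr
      _ = c ^ (k + 1) * m (ball x r) := by ring

lemma measure_ball_lt_top_of_doubling [LocallyCompactSpace X] [IsFiniteMeasureOnCompacts m]
    (hVD : ∀ (x : X) (r : ℝ), 0 < r → m (ball x (2 * r)) ≤ c * m (ball x r)) (hc : c ≠ ∞)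
    (x : X) (s : ℝ) : m (ball x s) < ∞ := by
  obtain ⟨K, hK, hKx⟩ := exists_compact_mem_nhds x
  obtain ⟨ε, hε, hεK⟩ := Metric.mem_nhds_iff.mp hKx
  obtain ⟨k, hk⟩ := pow_unbounded_of_one_lt (s / ε) one_lt_two
  calc m (ball x s) ≤ m (ball x (2 ^ k * ε)) :=
        measure_mono (ball_subset_ball (by rw [div_lt_iff₀ hε] at hk; linarith))
    _ ≤ c ^ k * m (ball x ε) := measure_ball_two_pow_mul_le hVD x hε k
    _ ≤ c ^ k * m K := by gcongr
    _ < ∞ := ENNReal.mul_lt_top (ENNReal.pow_lt_top hc.lt_top) hK.measure_lt_top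

variable [OpensMeasurableSpace X] {ε : ℝ} {N : Set X}

/-- The disjoint balls `B(w, ε/2)` around the points `w` all lie in
`B(x, 5ε/2)`, and each of them carries at least `c⁻⁴` of its mass since
`B(x, 5ε/2) ⊆ B(w, 2⁴ · ε/2)`. -/
lemma IsSeparatedSet.card_le_of_measure_ball (hN : IsSeparatedSet ε N) (hε : 0 < ε)
    (hVD : ∀ (x : X) (r : ℝ), 0 < r → m (ball x (2 * r)) ≤ c * m (ball x r)) {x : X}
    (h0 : m (ball x (5 / 2 * ε)) ≠ 0) (htop : m (ball x (5 / 2 * ε)) ≠ ∞) {F : Finset N}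
    (hF : ∀ w ∈ F, dist (w : X) x < 2 * ε) : (F.card : ℝ≥0∞) ≤ c ^ 4 := by
  set B := ball x (5 / 2 * ε)
  have hdisj : (F : Set N).PairwiseDisjoint fun w => ball (w : X) (ε / 2) := by
    intro a _ b _ hab
    refine Set.disjoint_left.2 fun u hua hub => ?_
    have := hN a a.2 b b.2 (Subtype.coe_injective.ne hab)
    rw [mem_ball] at hua hub
    linarith [dist_triangle_left (a : X) b u]
  have hsmall : ∀ w ∈ F, ball (w : X) (ε / 2) ⊆ B := fun w hw u hu => by
    rw [mem_ball] at hu ⊢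
    linarith [dist_triangle u w x, hF w hw]
  have hbig : ∀ w ∈ F, m B ≤ c ^ 4 * m (ball (w : X) (ε / 2)) := fun w hw =>
    calc m B ≤ m (ball (w : X) (2 ^ 4 * (ε / 2))) := measure_mono fun u hu => by
          rw [mem_ball] at hu ⊢
          linarith [dist_triangle u x w, dist_comm (w : X) x, hF w hw]
      _ ≤ _ := measure_ball_two_pow_mul_le hVD _ (by positivity) 4
  refine (ENNReal.mul_le_mul_iff_left h0 htop).1 ?_
  calc (F.card : ℝ≥0∞) * m B = ∑ _w ∈ F, m B := by rw [Finset.sum_const, nsmul_eq_mul]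
    _ ≤ ∑ w ∈ F, c ^ 4 * m (ball (w : X) (ε / 2)) := Finset.sum_le_sum hbig
    _ = c ^ 4 * m (⋃ w ∈ F, ball (w : X) (ε / 2)) := by
        rw [← Finset.mul_sum, measure_biUnion_finset hdisj fun _ _ => measurableSet_ball]
    _ ≤ c ^ 4 * m B := by gcongr; exact Set.iUnion₂_subset hsmall

variable [LocallyCompactSpace X] [IsFiniteMeasureOnCompacts m] [m.IsOpenPosMeasure]

lemma IsSeparatedSet.card_le (hN : IsSeparatedSet ε N) (hε : 0 < ε)
    (hVD : ∀ (x : X) (r : ℝ), 0 < r → m (ball x (2 * r)) ≤ c * m (ball x r)) (hc : c ≠ ∞)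
    {x : X} {F : Finset N} (hF : ∀ w ∈ F, dist (w : X) x < 2 * ε) :
    (F.card : ℝ) ≤ (c ^ 4).toReal := by
  simpa using ENNReal.toReal_mono (ENNReal.pow_ne_top hc) <|
    hN.card_le_of_measure_ball hε hVD (measure_ball_pos m x (by positivity)).ne'
      (measure_ball_lt_top_of_doubling hVD hc x _).ne hF

lemma IsSeparatedSet.finite_setOf_dist_lt (hN : IsSeparatedSet ε N) (hε : 0 < ε)
    (hVD : ∀ (x : X) (r : ℝ), 0 < r → m (ball x (2 * r)) ≤ c * m (ball x r)) (hc : c ≠ ∞)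
    (x : X) : {w : N | dist (w : X) x < 2 * ε}.Finite := by
  by_contra hinf
  obtain ⟨F, hF, hcard⟩ := Set.Infinite.exists_subset_card_eq hinf (⌈(c ^ 4).toReal⌉₊ + 1)
  have := hN.card_le hε hVD hc (F := F) fun w hw => hF hw
  rw [hcard] at this
  push_cast at this
  linarith [Nat.le_ceil (c ^ 4).toReal]

end Doubling

section Discretize

variable {X : Type*} [MetricSpace X] [MeasurableSpace X] {m : Measure X} {f : X → ℝ}

lemma ballAvg_eq_setAverage (z : X) (r : ℝ) : ballAvg m f z r = ⨍ y in ball z r, f y ∂m := by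
  rw [setAverage_eq, smul_eq_mul, measureReal_def, ballAvg]

lemma abs_ballAvg_sub_le [OpensMeasurableSpace X] {z : X} {r b M : ℝ} (h0 : m (ball z r) ≠ 0)
    (htop : m (ball z r) ≠ ∞) (hf : IntegrableOn f (ball z r) m)
    (h : ∀ y ∈ ball z r, |f y - b| ≤ M) : |ballAvg m f z r - b| ≤ M := by
  rw [ballAvg_eq_setAverage, ← Real.dist_eq, ← mem_closedBall]
  refine (convex_closedBall b M).set_average_mem isClosed_closedBall h0 htop ?_ hf
  exact (ae_restrict_iff' measurableSet_ball).2 <| ae_of_all _ fun y hy =>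
    mem_closedBall.2 ((Real.dist_eq _ _).trans_le (h y hy))

variable {N : Set X} {n : ℕ} {x y : X}

lemma discretize_eq_sum (hn : 0 < n) {s : Finset N}
    (hs : ∀ w : N, dist (w : X) x < 2 / n → w ∈ s) :
    discretize m N n f x = ∑ w ∈ s, ballAvg m f w (n : ℝ)⁻¹ * pou (2 / n) N w x :=
  tsum_eq_sum fun w hw => by
    rw [pou, cutFn_eq_zero_of_le_dist _ (by positivity) (not_lt.1 (mt (hs w) hw)), zero_div,
      mul_zero]

lemma IsNet.abs_discretize_sub_le (hN : IsNet (n : ℝ)⁻¹ N) (hn : 0 < n)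
    (hfin : {w : N | dist (w : X) x < 2 / n}.Finite) {b M : ℝ}
    (h : ∀ w : N, dist (w : X) x < 2 / n → |ballAvg m f w (n : ℝ)⁻¹ - b| ≤ M) :
    |discretize m N n f x - b| ≤ M := by
  have hs : ∀ w : N, dist (w : X) x < 2 / n → w ∈ hfin.toFinset := fun w => hfin.mem_toFinset.2
  have hS := hN.one_half_le_netSum_two_div hn hs
  rw [discretize_eq_sum hn hs, ← Real.dist_eq, ← mem_closedBall]
  simp_rw [mul_comm (ballAvg _ _ _ _), ← smul_eq_mul]
  exact (convex_closedBall b M).sum_mem (fun w _ => pou_nonneg (by linarith) _)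
    (sum_pou_eq_one (by positivity) hs (by linarith)) fun w hw =>
      mem_closedBall.2 ((Real.dist_eq _ _).trans_le (h w (hfin.mem_toFinset.1 hw)))

lemma IsNet.abs_discretize_sub_discretize_le (hN : IsNet (n : ℝ)⁻¹ N) (hn : 0 < n)
    {t : Finset N} (hx : ∀ w : N, dist (w : X) x < 2 / n → w ∈ t)
    (hy : ∀ w : N, dist (w : X) y < 2 / n → w ∈ t) {M : ℝ}
    (hM : ∀ w ∈ t, |ballAvg m f w (n : ℝ)⁻¹| ≤ M) :
    |discretize m N n f x - discretize m N n f y| ≤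
      t.card * (2 + 4 * t.card) * M * (n * dist x y / 2) := by
  have hpou (w : N) : |pou (2 / n) N w x - pou (2 / n) N w y| ≤
      (2 + 4 * t.card) * (dist x y / (2 / n)) :=
    abs_pou_sub_le (by positivity) hx hy (hN.one_half_le_netSum_two_div hn hx)
      (hN.one_half_le_netSum_two_div hn hy) w
  rw [discretize_eq_sum hn hx, discretize_eq_sum hn hy, ← Finset.sum_sub_distrib]
  calc _ ≤ ∑ w ∈ t, |ballAvg m f w (n : ℝ)⁻¹ * pou (2 / n) N w x -
          ballAvg m f w (n : ℝ)⁻¹ * pou (2 / n) N w y| := Finset.abs_sum_le_sum_abs _ _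
    _ ≤ ∑ _w ∈ t, M * ((2 + 4 * t.card) * (dist x y / (2 / n))) :=
        Finset.sum_le_sum fun w hw => by
          rw [← mul_sub, abs_mul]
          exact mul_le_mul (hM w hw) (hpou w) (abs_nonneg _) ((abs_nonneg _).trans (hM w hw))
    _ = _ := by
        have : (n : ℝ) ≠ 0 := by positivity
        rw [Finset.sum_const, nsmul_eq_mul]; field_simp

lemma IsNet.abs_discretize_sub_discretize_le_of_card_le (hN : IsNet (n : ℝ)⁻¹ N) (hn : 0 < n)
    (hfinx : {w : N | dist (w : X) x < 2 / n}.Finite)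
    (hfiny : {w : N | dist (w : X) y < 2 / n}.Finite) {K M : ℝ}
    (hKx : (hfinx.toFinset.card : ℝ) ≤ K) (hKy : (hfiny.toFinset.card : ℝ) ≤ K)
    (hM : ∀ w : N, |ballAvg m f w (n : ℝ)⁻¹| ≤ M) :
    |discretize m N n f x - discretize m N n f y| ≤ K * (2 + 8 * K) * n * M * dist x y := by
  classical
  set t := hfinx.toFinset ∪ hfiny.toFinset
  have ht : (t.card : ℝ) ≤ 2 * K := by
    have : (t.card : ℝ) ≤ hfinx.toFinset.card + hfiny.toFinset.card := by
      exact_mod_cast Finset.card_union_le _ _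
    linarith
  have hK0 : 0 ≤ K := (Nat.cast_nonneg _).trans hKx
  obtain ⟨z, hz, -⟩ := hN.exists_dist_lt (by positivity) x
  have hM0 : 0 ≤ M := (abs_nonneg _).trans (hM ⟨z, hz⟩)
  calc _ ≤ t.card * (2 + 4 * t.card) * M * (n * dist x y / 2) :=
        hN.abs_discretize_sub_discretize_le hn
          (fun w hw => Finset.mem_union_left _ (hfinx.mem_toFinset.2 hw))
          (fun w hw => Finset.mem_union_right _ (hfiny.mem_toFinset.2 hw)) fun w _ => hM w
    _ ≤ 2 * K * (2 + 4 * (2 * K)) * M * (n * dist x y / 2) := by gcongr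
    _ = _ := by ring

end Discretize

lemma abs_sub_le_iSup_of_dist_lt {X : Type*} [MetricSpace X] {f : X → ℝ}
    (hf : BddAbove (Set.range fun y => |f y|)) {δ : ℝ} {y z : X} (h : dist y z < δ) :
    |f y - f z| ≤ ⨆ p : {p : X × X // dist p.1 p.2 < δ}, |f (p : X × X).1 - f (p : X × X).2| := by
  obtain ⟨M, hM⟩ := hf
  refine le_ciSup (f := fun p : {p : X × X // dist p.1 p.2 < δ} => |f p.1.1 - f p.1.2|)
    ⟨2 * M, ?_⟩ ⟨(y, z), h⟩
  rintro _ ⟨p, rfl⟩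
  linarith [abs_sub (f p.1.1) (f p.1.2), hM ⟨p.1.1, rfl⟩, hM ⟨p.1.2, rfl⟩]

theorem discretize_estimates_general {X : Type*} [MetricSpace X] [LocallyCompactSpace X]
    [MeasurableSpace X] [BorelSpace X] (m : Measure X)
    (hmfin : ∀ K : Set X, IsCompact K → m K < ∞)
    (hmpos : ∀ U : Set X, IsOpen U → U.Nonempty → 0 < m U)
    (C_D : ℝ) (hCD : 1 < C_D)
    (hVD : ∀ (x : X) (r : ℝ), 0 < r →
      m (Metric.ball x (2 * r)) ≤ ENNReal.ofReal C_D * m (Metric.ball x r))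
    (n : ℕ) (hn : 0 < n) (N : Set X) (hN : IsNet ((n : ℝ)⁻¹) N)
    (f : X → ℝ) (hf : Continuous f) (hfc : HasCompactSupport f) :
    (∀ x : X, |discretize m N n f x| ≤ ⨆ y : X, |f y|) ∧
    (∀ x : X, |discretize m N n f x - f x| ≤
      ⨆ p : {p : X × X // dist p.1 p.2 < 3 / (n : ℝ)}, |f (p : X × X).1 - f (p : X × X).2|) ∧
    (∃ C : ℝ, 0 < C ∧ ∀ x y : X, |discretize m N n f x - discretize m N n f y| ≤
      C * (n : ℝ) * (⨆ y : X, |f y|) * dist x y) := by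
  have : IsFiniteMeasureOnCompacts m := ⟨fun K hK => hmfin K hK⟩
  have : m.IsOpenPosMeasure := ⟨fun U hU hne => (hmpos U hU hne).ne'⟩
  have hε : (0 : ℝ) < (n : ℝ)⁻¹ := by positivity
  have hr : (2 : ℝ) / n = 2 * (n : ℝ)⁻¹ := div_eq_mul_inv _ _
  have hK : (ENNReal.ofReal C_D ^ 4).toReal = C_D ^ 4 := by
    rw [toReal_pow, toReal_ofReal (by linarith)]
  have hfin (x : X) : {w : N | dist (w : X) x < 2 / n}.Finite :=
    hr ▸ hN.1.finite_setOf_dist_lt hε hVD ofReal_ne_top x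
  have hcard (x : X) : ((hfin x).toFinset.card : ℝ) ≤ C_D ^ 4 :=
    hK ▸ hN.1.card_le hε hVD ofReal_ne_top fun w hw => hr ▸ (hfin x).mem_toFinset.1 hw
  have hbdd : BddAbove (Set.range fun y => |f y|) :=
    hf.abs.bddAbove_range_of_hasCompactSupport hfc.abs
  have havg (z : X) {b M : ℝ} (h : ∀ y ∈ ball z (n : ℝ)⁻¹, |f y - b| ≤ M) :
      |ballAvg m f z (n : ℝ)⁻¹ - b| ≤ M :=
    abs_ballAvg_sub_le (measure_ball_pos m z hε).ne'
      (measure_ball_lt_top_of_doubling hVD ofReal_ne_top z _).ne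
      (hf.integrable_of_hasCompactSupport hfc).integrableOn h
  have havg_sup (z : X) : |ballAvg m f z (n : ℝ)⁻¹| ≤ ⨆ y : X, |f y| := by
    simpa using havg z (b := 0) fun y _ => by simpa using le_ciSup hbdd y
  refine ⟨fun x => ?_, fun x => ?_, ⟨C_D ^ 4 * (2 + 8 * C_D ^ 4), by positivity, fun x y => ?_⟩⟩
  · simpa using hN.abs_discretize_sub_le hn (hfin x) (b := 0) fun w _ => by
      simpa using havg_sup w
  · refine hN.abs_discretize_sub_le hn (hfin x) fun w hw => havg w fun y hy => ?_
    refine abs_sub_le_iSup_of_dist_lt hbdd ?_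
    rw [mem_ball] at hy
    linarith [dist_triangle y w x, show (3 : ℝ) / n = (n : ℝ)⁻¹ + 2 / n by ring]
  · exact hN.abs_discretize_sub_discretize_le_of_card_le hn (hfin x) (hfin y) (hcard x) (hcard y)
      fun w => havg_sup w

/-- on a metric measure space satisfying volume doubling with
constant `C_D`, for an `n⁻¹`-net `N` and a continuous compactly supported `f`, the
discretization `f_n := ∑_{z∈N} f_{B(z,1/n)} φ_z` satisfies
(i) `sup|f_n| ≤ sup|f|`;
(ii) `|f_n(x) − f(x)| ≤ sup{|f(z)−f(w)| : d(z,w) < 3/n}` for all `x`;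
(iii) `|f_n(x) − f_n(y)| ≤ C n (sup|f|) d(x,y)` for some `C > 0` depending only
on `C_D`. -/
theorem discretize_estimates {X : Type*} [MetricSpace X] [CompleteSpace X]
    [LocallyCompactSpace X] [TopologicalSpace.SeparableSpace X] [Nontrivial X]
    [MeasurableSpace X] [BorelSpace X] (m : Measure X)
    (hmfin : ∀ K : Set X, IsCompact K → m K < ∞)
    (hmpos : ∀ U : Set X, IsOpen U → U.Nonempty → 0 < m U)
    (C_D : ℝ) (hCD : 1 < C_D)
    (hVD : ∀ (x : X) (r : ℝ), 0 < r →
      m (Metric.ball x (2 * r)) ≤ ENNReal.ofReal C_D * m (Metric.ball x r))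
    (n : ℕ) (hn : 0 < n) (N : Set X) (hN : IsNet ((n : ℝ)⁻¹) N)
    (f : X → ℝ) (hf : Continuous f) (hfc : HasCompactSupport f) :
    (∀ x : X, |discretize m N n f x| ≤ ⨆ y : X, |f y|) ∧
    (∀ x : X, |discretize m N n f x - f x| ≤
      ⨆ p : {p : X × X // dist p.1 p.2 < 3 / (n : ℝ)}, |f (p : X × X).1 - f (p : X × X).2|) ∧
    (∃ C : ℝ, 0 < C ∧ ∀ x y : X, |discretize m N n f x - discretize m N n f y| ≤
      C * (n : ℝ) * (⨆ y : X, |f y|) * dist x y) :=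
  discretize_estimates_general m hmfin hmpos C_D hCD hVD n hn N hN f hf hfc
end

section
/- Let (X,d) be a geodesic metric space, let x ∈ X, r > 0 and λ ≥ 1, and let N be an (r/λ)-net in the metric subspace (B(x,r), d). Then for any y_1, y_2 ∈ N there exist k ∈ ℕ with k ≤ 3λ and points z_0, z_1, …, z_k ∈ N such that z_0 = y_1, z_k = y_2 and d(z_i, z_{i+1}) ≤ 3r/λ for all i ∈ {0, …, k−1}. -/
open Metric

/-- in a geodesic metric space, if `N` is an `(r/λ)`-net in the
ball `B(x,r)` (an `(r/λ)`-separated subset of `B(x,r)` maximal among `(r/λ)`-separated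
subsets of `B(x,r)`), then any two points `y₁, y₂ ∈ N` can be joined by a chain
`z_0 = y₁, z_1, …, z_k = y₂` of points of `N` with `k ≤ 3λ` and
`d(z_i, z_{i+1}) ≤ 3r/λ` for all `i < k`. -/
theorem net_chain_in_ball {X : Type*} [MetricSpace X]
    (hgeo : IsGeodesicDist (fun x y : X => dist x y))
    (x : X) (r lam : ℝ) (hr : 0 < r) (hlam : 1 ≤ lam)
    (N : Set X) (hNsub : N ⊆ Metric.ball x r)
    (hNsep : IsSeparatedSet (r / lam) N)
    (hNmax : ∀ M : Set X, M ⊆ Metric.ball x r → N ⊆ M →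
      IsSeparatedSet (r / lam) M → M = N) :
    ∀ y₁ ∈ N, ∀ y₂ ∈ N, ∃ (k : ℕ) (z : ℕ → X),
      1 ≤ k ∧ (k : ℝ) ≤ 3 * lam ∧ (∀ i ≤ k, z i ∈ N) ∧
      z 0 = y₁ ∧ z k = y₂ ∧ ∀ i < k, dist (z i) (z (i + 1)) ≤ 3 * r / lam := by
  intro y₁ hy₁ y₂ hy₂
  have hlam0 : (0:ℝ) < lam := lt_of_lt_of_le one_pos hlam
  have hrl : (0:ℝ) < r / lam := div_pos hr hlam0
  -- density of N in the ball
  have dense : ∀ p ∈ Metric.ball x r, ∃ w ∈ N, dist p w < r / lam := by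
    intro p hp
    by_contra h
    push_neg at h
    have hpN : p ∉ N := fun hpN => by
      have := h p hpN
      rw [dist_self] at this
      linarith
    have hsep : IsSeparatedSet (r / lam) (insert p N) := by
      intro a ha b hb hab
      rcases ha with rfl | ha
      · rcases hb with rfl | hb
        · exact absurd rfl hab
        · exact h b hb
      · rcases hb with rfl | hb
        · rw [dist_comm]; exact h a ha
        · exact hNsep a ha b hb hab
    have := hNmax (insert p N) (by
      intro q hq; rcases hq with rfl | hq
      · exact hp
      · exact hNsub hq) (Set.subset_insert p N) hsep
    exact hpN (this ▸ Set.mem_insert p N)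
  -- the two geodesics
  obtain ⟨γ₁, hγ₁0, hγ₁1, hγ₁⟩ := hgeo y₁ x
  obtain ⟨γ₂, hγ₂0, hγ₂1, hγ₂⟩ := hgeo x y₂
  set d₁ := dist y₁ x with hd₁
  set d₂ := dist x y₂ with hd₂
  have hd₁0 : 0 ≤ d₁ := dist_nonneg
  have hd₂0 : 0 ≤ d₂ := dist_nonneg
  have hd₁r : d₁ < r := hNsub hy₁
  have hd₂r : d₂ < r := by rw [hd₂, dist_comm]; exact hNsub hy₂
  set L := d₁ + d₂ with hL
  have hL0 : 0 ≤ L := add_nonneg hd₁0 hd₂0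
  have hLr : L < 2 * r := by rw [hL]; linarith
  set q : ℝ → X := fun s => if s ≤ d₁ then γ₁ (s / d₁) else γ₂ ((s - d₁) / d₂) with hq
  -- distance along first leg to x
  have hq1 : ∀ s, 0 ≤ s → s ≤ d₁ → dist (q s) x = d₁ - s := by
    intro s hs0 hs1
    rcases eq_or_lt_of_le hd₁0 with h0 | h0
    · have hs : s = 0 := le_antisymm (hs1.trans h0.symm.le) hs0
      subst hs
      simp only [hq, if_pos hs1, zero_div, hγ₁0]
      rw [← hd₁, ← h0]; simp
    · have hm : s / d₁ ∈ Set.Icc (0:ℝ) 1 :=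
        ⟨div_nonneg hs0 hd₁0, (div_le_one h0).2 hs1⟩
      have := hγ₁ (s / d₁) hm 1 ⟨zero_le_one, le_refl 1⟩
      simp only [hq, if_pos hs1, hγ₁1] at this ⊢
      rw [this, ← hd₁, abs_of_nonpos (by
        have := (div_le_one h0).2 hs1; linarith), neg_sub]
      field_simp
    
  have hq2 : ∀ s, d₁ < s → s ≤ L → dist (q s) x = s - d₁ := by
    intro s hs0 hs1
    have hd₂p : 0 < d₂ := by
      by_contra h
      push_neg at h
      have : d₂ = 0 := le_antisymm h hd₂0
      rw [hL, this, add_zero] at hs1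
      linarith
    have hm : (s - d₁) / d₂ ∈ Set.Icc (0:ℝ) 1 :=
      ⟨div_nonneg (by linarith) hd₂0, (div_le_one hd₂p).2 (by rw [hL] at hs1; linarith)⟩
    have := hγ₂ ((s - d₁) / d₂) hm 0 ⟨le_refl 0, zero_le_one⟩
    simp only [hq, if_neg (not_le.2 hs0), hγ₂0] at this ⊢
    rw [this, ← hd₂, sub_zero, abs_of_nonneg (div_nonneg (by linarith) hd₂0)]
    field_simp
  have hqball : ∀ s, 0 ≤ s → s ≤ L → q s ∈ Metric.ball x r := by
    intro s hs0 hs1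
    rcases le_or_gt s d₁ with h | h
    · rw [Metric.mem_ball, hq1 s hs0 h]; linarith
    · rw [Metric.mem_ball, hq2 s h hs1]
      rw [hL] at hs1; linarith
  have hq0 : q 0 = y₁ := by
    simp only [hq, if_pos hd₁0, zero_div, hγ₁0]
  have hqL : q L = y₂ := by
    rcases eq_or_lt_of_le hd₂0 with h0 | h0
    · have hxy : x = y₂ := by
        rw [← dist_eq_zero (x := x) (y := y₂)]; exact h0.symm ▸ rfl
      have hLd : L = d₁ := by rw [hL, ← h0, add_zero]
      rcases eq_or_lt_of_le hd₁0 with h1 | h1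
      · have hy : y₁ = x := by rw [← dist_eq_zero]; exact h1.symm ▸ rfl
        simp only [hq, hLd, if_pos (le_refl d₁), ← h1]
        simp only [zero_div, hγ₁0]
        rw [hy, hxy]
        simp
      · simp only [hq, hLd, if_pos (le_refl d₁), div_self (ne_of_gt h1), hγ₁1]
        exact hxy
    · have hLd : ¬ (L ≤ d₁) := by rw [hL]; push_neg; linarith
      simp only [hq, if_neg hLd]
      rw [hL, add_sub_cancel_left, div_self (ne_of_gt h0), hγ₂1]
  -- step bound
  have hstep : ∀ s t, 0 ≤ s → s ≤ t → t ≤ L → dist (q s) (q t) ≤ t - s := by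
    intro s t hs0 hst htL
    have ht0 : 0 ≤ t := hs0.trans hst
    rcases le_or_gt t d₁ with ht | ht
    · -- both on first leg
      have hs1 : s ≤ d₁ := hst.trans ht
      rcases eq_or_lt_of_le hd₁0 with h0 | h0
      · have : s = 0 ∧ t = 0 := ⟨le_antisymm (hs1.trans h0.symm.le) hs0,
          le_antisymm (ht.trans h0.symm.le) ht0⟩
        rw [this.1, this.2]; simp
      · have hms : s / d₁ ∈ Set.Icc (0:ℝ) 1 := ⟨div_nonneg hs0 hd₁0, (div_le_one h0).2 hs1⟩
        have hmt : t / d₁ ∈ Set.Icc (0:ℝ) 1 := ⟨div_nonneg ht0 hd₁0, (div_le_one h0).2 ht⟩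
        have := hγ₁ (s / d₁) hms (t / d₁) hmt
        dsimp only at this
        simp only [hq, if_pos hs1, if_pos ht]
        rw [this, ← hd₁, abs_of_nonpos (by
          have : s / d₁ ≤ t / d₁ := by gcongr
          linarith), neg_sub]
        rw [div_sub_div_same, div_mul_eq_mul_div, mul_div_assoc,
          div_self (ne_of_gt h0), mul_one]
    · rcases le_or_gt s d₁ with hs | hs
      · -- crossing x
        calc dist (q s) (q t) ≤ dist (q s) x + dist x (q t) := dist_triangle _ _ _
          _ = (d₁ - s) + (t - d₁) := by
              rw [hq1 s hs0 hs, dist_comm, hq2 t ht htL]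
          _ = t - s := by ring
      · -- both on second leg
        have hd₂p : 0 < d₂ := by
          by_contra h
          push_neg at h
          have : d₂ = 0 := le_antisymm h hd₂0
          rw [hL, this, add_zero] at htL
          linarith
        have hms : (s - d₁) / d₂ ∈ Set.Icc (0:ℝ) 1 :=
          ⟨div_nonneg (by linarith) hd₂0, (div_le_one hd₂p).2 (by rw [hL] at htL; linarith)⟩
        have hmt : (t - d₁) / d₂ ∈ Set.Icc (0:ℝ) 1 :=
          ⟨div_nonneg (by linarith) hd₂0, (div_le_one hd₂p).2 (by rw [hL] at htL; linarith)⟩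
        have := hγ₂ ((s - d₁) / d₂) hms ((t - d₁) / d₂) hmt
        dsimp only at this
        simp only [hq, if_neg (not_le.2 hs), if_neg (not_le.2 ht)]
        rw [this, ← hd₂, abs_of_nonpos (by
          have : (s - d₁) / d₂ ≤ (t - d₁) / d₂ := by gcongr
          linarith), neg_sub]
        rw [div_sub_div_same, div_mul_eq_mul_div, mul_div_assoc,
          div_self (ne_of_gt hd₂p), mul_one]
        ring_nf
        exact le_refl _
  -- the number of steps
  set k : ℕ := max 1 ⌈lam * L / r⌉₊ with hk
  have hk1 : 1 ≤ k := le_max_left _ _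
  have hkpos : (0:ℝ) < (k:ℝ) := by exact_mod_cast hk1
  have hk3 : (k:ℝ) ≤ 3 * lam := by
    rw [hk]
    push_cast [Nat.cast_max]
    apply max_le
    · linarith
    · have h1 : (⌈lam * L / r⌉₊ : ℝ) < lam * L / r + 1 :=
        Nat.ceil_lt_add_one (by positivity)
      have h2 : lam * L / r < 2 * lam := by
        rw [div_lt_iff₀ hr]
        nlinarith
      linarith
  set δ : ℝ := L / k with hδ
  have hδ0 : 0 ≤ δ := div_nonneg hL0 hkpos.le
  have hδle : δ ≤ r / lam := by
    rw [hδ, div_le_div_iff₀ hkpos hlam0]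
    have : lam * L / r ≤ (k:ℝ) := (Nat.le_ceil _).trans (by exact_mod_cast Nat.le_max_right 1 _)
    rw [div_le_iff₀ hr] at this
    nlinarith
  have hkδ : (k:ℝ) * δ = L := by
    rw [hδ]; field_simp
  set g : ℕ → X := fun i => q (i * δ) with hg
  have hgball : ∀ i ≤ k, g i ∈ Metric.ball x r := by
    intro i hi
    apply hqball
    · positivity
    · rw [← hkδ]
      have : (i:ℝ) ≤ (k:ℝ) := by exact_mod_cast hi
      nlinarith
  have hgstep : ∀ i, i < k → dist (g i) (g (i+1)) ≤ δ := by
    intro i hi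
    have h1 : (i:ℝ) * δ ≤ (i+1:ℕ) * δ := by
      push_cast; nlinarith
    have h2 : ((i+1:ℕ):ℝ) * δ ≤ L := by
      rw [← hkδ]
      have : ((i+1:ℕ):ℝ) ≤ (k:ℝ) := by exact_mod_cast hi
      nlinarith
    have := hstep ((i:ℝ) * δ) (((i+1:ℕ):ℝ) * δ) (by positivity) h1 h2
    calc dist (g i) (g (i+1)) ≤ ((i+1:ℕ):ℝ) * δ - (i:ℝ) * δ := this
      _ = δ := by push_cast; ring
  have hg0 : g 0 = y₁ := by
    simp only [hg, Nat.cast_zero, zero_mul, hq0]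
  have hgk : g k = y₂ := by
    simp only [hg, hkδ, hqL]
  -- choose net points near the g i
  have hchoice : ∀ i : ℕ, ∃ w : X, i ≤ k → w ∈ N ∧ dist (g i) w < r / lam := by
    intro i
    rcases le_or_gt i k with hi | hi
    · obtain ⟨w, hw, hw'⟩ := dense (g i) (hgball i hi)
      exact ⟨w, fun _ => ⟨hw, hw'⟩⟩
    · exact ⟨y₁, fun h => absurd h (not_le.2 hi)⟩
  choose w hw using hchoice
  set z : ℕ → X := fun i => if i = 0 then y₁ else if k ≤ i then y₂ else w i with hz
  have hzN : ∀ i ≤ k, z i ∈ N ∧ dist (z i) (g i) ≤ r / lam := by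
    intro i hi
    rcases Nat.eq_zero_or_pos i with rfl | hi0
    · simp only [hz, if_pos rfl, hg0, dist_self]
      exact ⟨hy₁, hrl.le⟩
    · rcases eq_or_lt_of_le hi with heq | hik
      · have hne : ¬ (k = 0) := Nat.pos_iff_ne_zero.1 hk1
        rw [heq]
        simp only [hz, if_neg hne, if_pos (le_refl k), hgk, dist_self]
        exact ⟨hy₂, hrl.le⟩
      · simp only [hz, if_neg (Nat.pos_iff_ne_zero.1 hi0), if_neg (not_le.2 hik)]
        obtain ⟨h1, h2⟩ := hw i hi
        exact ⟨h1, by rw [dist_comm]; exact h2.le⟩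
  refine ⟨k, z, hk1, hk3, fun i hi => (hzN i hi).1, ?_, ?_, ?_⟩
  · simp only [hz, if_pos rfl]
  · have : ¬ (k = 0) := Nat.pos_iff_ne_zero.1 hk1
    simp only [hz, if_neg this, if_pos (le_refl k)]
  · intro i hi
    have h1 := (hzN i (le_of_lt hi)).2
    have h2 := (hzN (i+1) hi).2
    have h3 := hgstep i hi
    calc dist (z i) (z (i+1))
        ≤ dist (z i) (g i) + dist (g i) (g (i+1)) + dist (g (i+1)) (z (i+1)) :=
          dist_triangle4 _ _ _ _
      _ ≤ r / lam + δ + r / lam := by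
          rw [dist_comm (g (i+1))]
          exact add_le_add (add_le_add h1 h3) h2
      _ ≤ 3 * r / lam := by
          rw [mul_div_assoc]
          linarith
end
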